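/- arXiv:2010.14338 — 5 statements merged into one kernel-verified Lean document; each statement's English description precedes it below -/
import Mathlib

section
/- There is an absolute constant c > 0 such that for every integer s ≥ 2 there exists a MinGMConn instance (P,D) with D nonempty whose input points lie on at most s distinct x-coordinates (and have pairwise distinct y-coordinates) such that opt(P,D) ≥ c·(log₂ s)·IS(P,D). In other words, the bound opt(P,D) = O(log s)·IS(P,D) for s-thin instances is tight up to a constant factor. -/
/-!
The instance is the bit-reversal permutation on `2^(n+1)` points: the point at time `t` is
`(rev t, t)`, and any two times that differ in exactly one bit `ℓ` form a demand of level `ℓ`;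
there are `(n+1) 2^n` demands, all pointing up and to the right. A boundary independent set has
distinct left (or right) endpoints, so `IS ≤ 2^(n+1)`.

For the lower bound, the two endpoints of a level-`ℓ` demand lie in the same dyadic block of
`x`-coordinates of length `2^(n+1-ℓ)`, on either side of its midpoint. A monotone path crosses
the vertical line through this midpoint along a horizontal edge, in a row inside the time range
of the demand. Among the demands charged to one row, the midpoint of the one of lower (or equal)
level never lies in the block of the other, so each of them is determined by the consecutive
pair of points of the row around its midpoint, and a row with `r` points carries at most `2r`
demands. Summing over rows gives `(n+1) 2^n ≤ 2 (2^(n+1) + |Q|)`, i.e. `|Q| = Ω(n 2^n)`.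
-/

abbrev Pt := ℝ × ℝ
abbrev Dem := Pt × Pt

noncomputable section

/-- ℓ1 distance in the plane. -/
def dist1 (p q : Pt) : ℝ := |p.1 - q.1| + |p.2 - q.2|

/-- Two points are aligned if they are vertically or horizontally aligned. -/
def Aligned (p q : Pt) : Prop := p.1 = q.1 ∨ p.2 = q.2

/-- `p` and `q` are Manhattan-connected in the point set `S`: the Manhattan graph on `S`
contains a rectilinear path from `p` to `q` of total length `‖p - q‖₁`. -/
def MConnected (S : Set Pt) (p q : Pt) : Prop :=
  ∃ (k : ℕ) (f : Fin (k + 1) → Pt),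
    f 0 = p ∧ f (Fin.last k) = q ∧ (∀ i, f i ∈ S) ∧
    (∀ i : Fin k, Aligned (f i.castSucc) (f i.succ)) ∧
    (∑ i : Fin k, dist1 (f i.castSucc) (f i.succ)) = dist1 p q

/-- `Q` is a feasible solution for the instance `(P, D)`. -/
def MFeasible (P : Set Pt) (D : Set Dem) (Q : Set Pt) : Prop :=
  ∀ d ∈ D, MConnected (P ∪ Q) d.1 d.2

/-- Minimum cardinality of a feasible solution. -/
def optN (P : Set Pt) (D : Set Dem) : ℕ :=
  sInf {n | ∃ Q : Finset Pt, MFeasible P D ↑Q ∧ Q.card = n}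

/-- The closed axis-aligned rectangle spanned by `p` and `q`. -/
def Rect (p q : Pt) : Set Pt :=
  {z | min p.1 q.1 ≤ z.1 ∧ z.1 ≤ max p.1 q.1 ∧ min p.2 q.2 ≤ z.2 ∧ z.2 ≤ max p.2 q.2}

/-- The interior of the axis-aligned rectangle spanned by `p` and `q`. -/
def RectInt (p q : Pt) : Set Pt :=
  {z | min p.1 q.1 < z.1 ∧ z.1 < max p.1 q.1 ∧ min p.2 q.2 < z.2 ∧ z.2 < max p.2 q.2}

/-- The four corners of the rectangle spanned by `p` and `q`. -/
def Corners (p q : Pt) : Set Pt := {(p.1, p.2), (p.1, q.2), (q.1, p.2), (q.1, q.2)}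

/-- Two demand rectangles are non-conflicting if neither contains a corner of the other
in its interior. -/
def NonConflicting (d e : Dem) : Prop :=
  (∀ c ∈ Corners e.1 e.2, c ∉ RectInt d.1 d.2) ∧
  (∀ c ∈ Corners d.1 d.2, c ∉ RectInt e.1 e.2)

/-- `IRN D` : maximum cardinality of an independent (pairwise non-conflicting) subset of `D`. -/
def IRN (D : Set Dem) : ℕ :=
  sSup {n | ∃ D' : Finset Dem, ↑D' ⊆ D ∧ D'.card = n ∧
    ∀ d ∈ D', ∀ e ∈ D', d ≠ e → NonConflicting d e}

/-- The vertical segment at `x = a` spanning the `y`-range between `y1` and `y2`. -/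
def VSeg (a y1 y2 : ℝ) : Set Pt :=
  {z | z.1 = a ∧ min y1 y2 ≤ z.2 ∧ z.2 ≤ max y1 y2}

/-- A finite set of demands is vertically separable: its demand rectangles can be ordered
`R₁, …, R_k` with vertical segments `ℓ₁, …, ℓ_k`, where `ℓᵢ` connects the interior of the top
boundary of `Rᵢ` with the interior of its bottom boundary and avoids `R_j` for all `j > i`. -/
def VertSeparable (D' : Finset Dem) : Prop :=
  ∃ (e : Fin D'.card → Dem) (a : Fin D'.card → ℝ),
    Function.Injective e ∧ (∀ i, e i ∈ D') ∧
    (∀ i, min (e i).1.1 (e i).2.1 < a i ∧ a i < max (e i).1.1 (e i).2.1) ∧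
    ∀ i j : Fin D'.card, i < j →
      VSeg (a i) (e i).1.2 (e i).2.2 ∩ Rect (e j).1 (e j).2 = ∅

/-- `VSN D` : maximum cardinality of a vertically separable subset of `D`. -/
def VSN (D : Set Dem) : ℕ :=
  sSup {n | ∃ D' : Finset Dem, ↑D' ⊆ D ∧ D'.card = n ∧ VertSeparable D'}

/-- `λ(p,q)` : the left vertical side of the demand rectangle `R(p,q)`. -/
def LSeg (d : Dem) : Set Pt := VSeg d.1.1 d.1.2 d.2.2

/-- `ρ(p,q)` : the right vertical side of the demand rectangle `R(p,q)`. -/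
def RSeg (d : Dem) : Set Pt := VSeg d.2.1 d.1.2 d.2.2

/-- A left boundary independent set: the left sides are pairwise non-overlapping. -/
def LeftBIS (D' : Finset Dem) : Prop :=
  ∀ d ∈ D', ∀ e ∈ D', d ≠ e → Set.Subsingleton (LSeg d ∩ LSeg e)

/-- A right boundary independent set: the right sides are pairwise non-overlapping. -/
def RightBIS (D' : Finset Dem) : Prop :=
  ∀ d ∈ D', ∀ e ∈ D', d ≠ e → Set.Subsingleton (RSeg d ∩ RSeg e)

/-- `ISN D` : maximum cardinality of a (left or right) boundary independent subset of `D`. -/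
def ISN (D : Set Dem) : ℕ :=
  sSup {n | ∃ D' : Finset Dem, ↑D' ⊆ D ∧ D'.card = n ∧ (LeftBIS D' ∨ RightBIS D')}

/-- `(P, D)` is a MinGMConn instance: demands are between input points, ordered by
`x`-coordinate. -/
def IsInstance (P : Finset Pt) (D : Finset Dem) : Prop :=
  ∀ d ∈ D, d.1 ∈ P ∧ d.2 ∈ P ∧ d.1.1 < d.2.1

/-- The points of `P` have pairwise distinct `x`-coordinates. -/
def DistinctX (P : Finset Pt) : Prop := ∀ p ∈ P, ∀ q ∈ P, p ≠ q → p.1 ≠ q.1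

/-- The points of `P` have pairwise distinct `y`-coordinates. -/
def DistinctY (P : Finset Pt) : Prop := ∀ p ∈ P, ∀ q ∈ P, p ≠ q → p.2 ≠ q.2

end

noncomputable section

/-- The `i`-th open vertical strip determined by boundaries `b` (with `b 0 = ⊥`, `b s = ⊤`). -/
def strip (s : ℕ) (b : Fin (s + 1) → EReal) (i : Fin s) : Set Pt :=
  {z | b i.castSucc < (z.1 : EReal) ∧ (z.1 : EReal) < b i.succ}

/-- `b` describes a strip subdivision into `s` vertical strips via `s - 1` vertical lines,
none of which passes through a point of `P`. -/
def IsStripSubdivision (s : ℕ) (b : Fin (s + 1) → EReal) (P : Finset Pt) : Prop :=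
  1 ≤ s ∧ StrictMono b ∧ b 0 = ⊥ ∧ b (Fin.last s) = ⊤ ∧
    ∀ p ∈ P, ∀ i : Fin (s + 1), (p.1 : EReal) ≠ b i

/-- The projections `π_𝒮(P)` of the points of `P` onto the adjacent strip boundaries. -/
def stripProj (s : ℕ) (b : Fin (s + 1) → EReal) (P : Set Pt) : Set Pt :=
  {z | ∃ p ∈ P, ∃ i : Fin s, p ∈ strip s b i ∧
    ((i.val ≠ 0 ∧ z = ((b i.castSucc).toReal, p.2)) ∨
     (i.val + 1 ≠ s ∧ z = ((b i.succ).toReal, p.2)))}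

/-- The demand set `π_𝒮(D)` of the inter-strip instance: demands between points in
different, non-adjacent strips, projected to the adjacent strip boundaries. -/
def stripDem (s : ℕ) (b : Fin (s + 1) → EReal) (D : Set Dem) : Set Dem :=
  {d | ∃ pq ∈ D, ∃ i j : Fin s,
    pq.1 ∈ strip s b i ∧ pq.2 ∈ strip s b j ∧ i.val + 2 ≤ j.val ∧
    d = (((b i.succ).toReal, pq.1.2), ((b j.castSucc).toReal, pq.2.2))}

/-- `p 0, …, p n` form a triangular instance of size `n` :
`x`-coordinates strictly increasing, while `p 1, …, p n` form a descending diagonal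
lying to the top-right of `p 0`. -/
def IsTriangular (n : ℕ) (p : Fin (n + 1) → Pt) : Prop :=
  (∀ i j : Fin (n + 1), i < j → (p i).1 < (p j).1) ∧
  (∀ i j : Fin (n + 1), i ≠ 0 → i < j → (p j).2 < (p i).2) ∧
  (∀ i : Fin (n + 1), i ≠ 0 → (p 0).2 < (p i).2)

/-- The point set of a triangular instance. -/
def triP (n : ℕ) (p : Fin (n + 1) → Pt) : Finset Pt := Finset.image p Finset.univ

/-- The demand set of a triangular instance: `(p 0, p i)` for `1 ≤ i ≤ n`. -/
def triD (n : ℕ) (p : Fin (n + 1) → Pt) : Finset Dem :=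
  Finset.image (fun i => (p 0, p i)) (Finset.univ.filter fun i : Fin (n + 1) => i ≠ 0)

/-- The triangular grid of a triangular instance. -/
def triGrid (n : ℕ) (p : Fin (n + 1) → Pt) : Set Pt :=
  {z | (∃ i, z.1 = (p i).1) ∧ (∃ j, z.2 = (p j).2) ∧
    ∃ i : Fin (n + 1), i ≠ 0 ∧ z ∈ Rect (p 0) (p i)}

/-- `Q` is arboreally satisfied: for every non-aligned pair of its points, the rectangle
they span contains a third point of `Q`. -/
def ArboreallySatisfied (Q : Finset Pt) : Prop :=
  ∀ p ∈ Q, ∀ q ∈ Q, ¬ Aligned p q → ∃ r ∈ Q, r ≠ p ∧ r ≠ q ∧ r ∈ Rect p q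

/-- The Manhattan graph on a finite point set `S`. -/
def manhattanGraph (S : Finset Pt) : SimpleGraph {x : Pt // x ∈ S} where
  Adj a b := a ≠ b ∧ Aligned a.1 b.1
  symm := ⟨fun _ _ h => ⟨h.1.symm, h.2.imp Eq.symm Eq.symm⟩⟩
  loopless := ⟨fun _ h => h.1 rfl⟩

/-- The demand graph of an instance `(P, D)`. -/
def demandGraph (P : Finset Pt) (D : Finset Dem) : SimpleGraph {x : Pt // x ∈ P} where
  Adj a b := a ≠ b ∧ (((a : Pt), (b : Pt)) ∈ D ∨ ((b : Pt), (a : Pt)) ∈ D)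
  symm := ⟨fun _ _ h => ⟨h.1.symm, h.2.symm⟩⟩
  loopless := ⟨fun _ h => h.1 rfl⟩

/-- `C` is an axis-aligned rectangle: a product of two intervals. -/
def IsAxisRect (C : Set Pt) : Prop :=
  ∃ I J : Set ℝ, I.OrdConnected ∧ J.OrdConnected ∧ C = I ×ˢ J

end


open Finset Set

theorem dist_add_dist_eq_of_sum_dist_eq {E : Type*} [PseudoMetricSpace E] (a : ℕ → E)
    {j n : ℕ} (hj : j ≤ n)
    (h : ∑ i ∈ range n, dist (a i) (a (i + 1)) = dist (a 0) (a n)) :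
    dist (a 0) (a j) + dist (a j) (a n) = dist (a 0) (a n) := by
  have h₁ := dist_le_range_sum_dist a j
  have h₂ := dist_le_Ico_sum_dist a hj
  have h₃ := dist_triangle (a 0) (a j) (a n)
  rw [← Finset.sum_range_add_sum_Ico _ hj] at h
  linarith

theorem Nat.exists_lt_and_not_succ {p : ℕ → Prop} {n : ℕ} (h₀ : p 0) (hn : ¬ p n) :
    ∃ j < n, p j ∧ ¬ p (j + 1) := by
  induction n with
  | zero => exact absurd h₀ hn
  | succ n ih =>
    by_cases hpn : p n
    · exact ⟨n, n.lt_succ_self, hpn, hn⟩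
    · obtain ⟨j, hj, hpj⟩ := ih hpn
      exact ⟨j, hj.trans n.lt_succ_self, hpj⟩

theorem dist1_eq_dist_add_dist (p q : Pt) : dist1 p q = dist p.1 q.1 + dist p.2 q.2 := rfl

theorem mem_Rect_iff_mem_uIcc {p q z : Pt} :
    z ∈ Rect p q ↔ z.1 ∈ uIcc p.1 q.1 ∧ z.2 ∈ uIcc p.2 q.2 :=
  and_assoc.symm

theorem mem_Rect_of_le {p q z : Pt} (hx : p.1 ≤ q.1) (hy : p.2 ≤ q.2) :
    z ∈ Rect p q ↔ z.1 ∈ Icc p.1 q.1 ∧ z.2 ∈ Icc p.2 q.2 := by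
  rw [mem_Rect_iff_mem_uIcc, uIcc_of_le hx, uIcc_of_le hy]

theorem mem_uIcc_of_dist_add_dist_eq {a b c : ℝ} (h : dist a b + dist b c = dist a c) :
    b ∈ uIcc a c :=
  segment_eq_uIcc a c ▸ mem_segment_iff_wbtw.mpr (dist_add_dist_eq_iff.mp h)

/-- The length of the path bounds the variation of each coordinate separately, so equality
with the `ℓ₁`-distance of the endpoints is equality for both coordinates. -/
theorem mem_Rect_of_sum_dist1_eq (F : ℕ → Pt) {j n : ℕ} (hj : j ≤ n)
    (h : ∑ i ∈ range n, dist1 (F i) (F (i + 1)) = dist1 (F 0) (F n)) :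
    F j ∈ Rect (F 0) (F n) := by
  simp only [dist1_eq_dist_add_dist, Finset.sum_add_distrib] at h
  have hx := dist_le_range_sum_dist (fun i => (F i).1) n
  have hy := dist_le_range_sum_dist (fun i => (F i).2) n
  rw [mem_Rect_iff_mem_uIcc]
  exact ⟨mem_uIcc_of_dist_add_dist_eq
      (dist_add_dist_eq_of_sum_dist_eq (fun i => (F i).1) hj (by linarith)),
    mem_uIcc_of_dist_add_dist_eq
      (dist_add_dist_eq_of_sum_dist_eq (fun i => (F i).2) hj (by linarith))⟩

theorem MConnected.exists_nat_path {S : Set Pt} {p q : Pt} (h : MConnected S p q) :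
    ∃ (n : ℕ) (F : ℕ → Pt), F 0 = p ∧ F n = q ∧ (∀ i ≤ n, F i ∈ S) ∧
      (∀ i < n, Aligned (F i) (F (i + 1))) ∧
      ∑ i ∈ range n, dist1 (F i) (F (i + 1)) = dist1 p q := by
  obtain ⟨n, f, hf₀, hfn, hS, hal, hsum⟩ := h
  let F : ℕ → Pt := fun i => if hi : i < n + 1 then f ⟨i, hi⟩ else q
  have hF : ∀ i (hi : i < n + 1), F i = f ⟨i, hi⟩ := fun i hi => dif_pos hi
  refine ⟨n, F, by rw [hF 0 n.succ_pos, ← hf₀]; rfl, by rw [hF n n.lt_succ_self, ← hfn]; rfl,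
    fun i hi => hF i (Nat.lt_succ_of_le hi) ▸ hS _,
    fun i hi => hF i (by omega) ▸ hF (i + 1) (by omega) ▸ hal ⟨i, hi⟩, ?_⟩
  rw [← hsum, ← Fin.sum_univ_eq_sum_range (fun i => dist1 (F i) (F (i + 1)))]
  refine Finset.sum_congr rfl fun i _ => ?_
  rw [hF i (by omega), hF (i + 1) (by omega)]
  rfl

theorem MConnected.exists_horizontal_crossing {S : Set Pt} {p q : Pt} (h : MConnected S p q)
    {μ : ℝ} (hp : p.1 ≤ μ) (hq : μ < q.1) :
    ∃ u ∈ S, ∃ v ∈ S, u.2 = v.2 ∧ u.1 ≤ μ ∧ μ < v.1 ∧ u ∈ Rect p q ∧ v ∈ Rect p q := by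
  obtain ⟨n, F, hF₀, hFn, hS, hal, hsum⟩ := h.exists_nat_path
  obtain ⟨j, hj, hFj, hFj'⟩ := Nat.exists_lt_and_not_succ (p := fun i => (F i).1 ≤ μ)
    (show (F 0).1 ≤ μ by rw [hF₀]; exact hp) (show ¬ (F n).1 ≤ μ by rw [hFn]; exact not_le.mpr hq)
  have hrect : ∀ i ≤ n, F i ∈ Rect p q := fun i hi =>
    hF₀ ▸ hFn ▸ mem_Rect_of_sum_dist1_eq F hi (hF₀ ▸ hFn ▸ hsum)
  refine ⟨F j, hS j hj.le, F (j + 1), hS (j + 1) hj, ?_, hFj, not_le.mp hFj', hrect j hj.le,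
    hrect (j + 1) hj⟩
  rcases hal j hj with hx | hy
  · exact absurd (hx ▸ hFj) hFj'
  · exact hy

theorem MConnected.exists_mem_Rect_ne {S : Set Pt} {p q : Pt} (h : MConnected S p q)
    (hx : p.1 < q.1) (hy : p.2 ≠ q.2) :
    ∃ z ∈ S, z ∈ Rect p q ∧ z ≠ p ∧ z ≠ q := by
  obtain ⟨u, hu, v, hv, huv, hup, hvp, huR, hvR⟩ := h.exists_horizontal_crossing le_rfl hx
  by_cases hpu : u = p
  · refine ⟨v, hv, hvR, fun hvp' => ?_, fun hvq => hy ?_⟩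
    · exact (hvp' ▸ hvp).false
    · rw [← hpu, huv, hvq]
  · exact ⟨u, hu, huR, hpu, fun huq => not_le.mpr hx (huq ▸ hup)⟩

theorem Finset.exists_consecutive_around {α : Type*} [LinearOrder α] (A : Finset α) {I : Set α}
    (hI : I.OrdConnected) {μ : α} (hlo : ∃ a ∈ A, a ∈ I ∧ a ≤ μ) (hhi : ∃ a ∈ A, a ∈ I ∧ μ ≤ a) :
    ∃ a ∈ A, ∃ a' ∈ A, a ∈ I ∧ a' ∈ I ∧ a ≤ μ ∧ μ ≤ a' ∧ ∀ b ∈ A, b ∉ Set.Ioo a a' := by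
  classical
  obtain ⟨a, ha, hmax⟩ := (A.filter (fun b => b ∈ I ∧ b ≤ μ)).exists_max_image id
    (by simpa [Finset.Nonempty] using hlo)
  obtain ⟨a', ha', hmin⟩ := (A.filter (fun b => b ∈ I ∧ μ ≤ b)).exists_min_image id
    (by simpa [Finset.Nonempty] using hhi)
  simp only [Finset.mem_filter, id] at ha ha' hmax hmin
  refine ⟨a, ha.1, a', ha'.1, ha.2.1, ha'.2.1, ha.2.2, ha'.2.2, fun b hb hab => ?_⟩
  have hbI : b ∈ I := hI.out ha.2.1 ha'.2.1 (Set.Ioo_subset_Icc_self hab)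
  rcases le_total b μ with hbμ | hμb
  · exact (hmax b ⟨hb, hbI, hbμ⟩).not_gt hab.1
  · exact (hmin b ⟨hb, hbI, hμb⟩).not_gt hab.2

/-- Each `d` is determined by the pair of consecutive points of `A` around `μ d` in `I d`, and
`A` has at most `2 * #A` such pairs (counting the pairs `(a, a)`). -/
theorem card_le_two_mul_card_of_separated {ι α : Type*} [LinearOrder α] (T : Finset ι)
    (A : Finset α) (I : ι → Set α) (μ : ι → α) (hI : ∀ d ∈ T, (I d).OrdConnected)
    (hA : ∀ d ∈ T, ∃ a ∈ A, ∃ a' ∈ A, a ∈ I d ∧ a' ∈ I d ∧ a ≤ μ d ∧ μ d ≤ a')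
    (hsep : ∀ d ∈ T, ∀ d' ∈ T, d ≠ d' → μ d ∉ I d' ∨ μ d' ∉ I d) :
    T.card ≤ 2 * A.card := by
  classical
  rcases T.eq_empty_or_nonempty with rfl | ⟨d₀, hd₀⟩
  · simp
  have : Nonempty α := let ⟨a, _⟩ := hA d₀ hd₀; ⟨a⟩
  have hgap : ∀ d ∈ T, ∃ a ∈ A, ∃ a' ∈ A, a ∈ I d ∧ a' ∈ I d ∧ a ≤ μ d ∧ μ d ≤ a' ∧
      ∀ b ∈ A, b ∉ Set.Ioo a a' := fun d hd => by
    obtain ⟨a, ha, a', ha', haI, ha'I, haμ, hμa'⟩ := hA d hd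
    exact A.exists_consecutive_around (hI d hd) ⟨a, ha, haI, haμ⟩ ⟨a', ha', ha'I, hμa'⟩
  choose! lo hlo hi hhi hloI hhiI hloμ hμhi hconsec using hgap
  have hpair : ∀ d ∈ T, ∀ d' ∈ T, lo d = lo d' → hi d = hi d' → d = d' := by
    intro d hd d' hd' hlo' hhi'
    by_contra hne
    have hμd' : μ d ∈ I d' :=
      (hI d' hd').out (hloI d' hd') (hhiI d' hd') ⟨hlo' ▸ hloμ d hd, hhi' ▸ hμhi d hd⟩
    have hμd : μ d' ∈ I d :=
      (hI d hd).out (hloI d hd) (hhiI d hd) ⟨hlo' ▸ hloμ d' hd', hhi' ▸ hμhi d' hd'⟩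
    exact (hsep d hd d' hd' hne).elim (· hμd') (· hμd)
  have hhi_eq : ∀ d ∈ T, ∀ d' ∈ T, lo d = lo d' → lo d < hi d → lo d' < hi d' →
      hi d = hi d' := by
    intro d hd d' hd' hlo' h h'
    by_contra hne
    rcases lt_or_gt_of_ne hne with hlt | hlt
    · exact hconsec d' hd' (hi d) (hhi d hd) ⟨hlo' ▸ h, hlt⟩
    · exact hconsec d hd (hi d') (hhi d' hd') ⟨hlo' ▸ h', hlt⟩
  calc T.card ≤ (A ×ˢ (Finset.univ : Finset Bool)).card := by
        refine Finset.card_le_card_of_injOn (fun d => (lo d, decide (lo d = hi d)))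
          (fun d hd => Finset.mem_product.mpr ⟨hlo d hd, Finset.mem_univ _⟩) fun d hd d' hd' h => ?_
        simp only [Prod.mk.injEq, decide_eq_decide] at h
        refine hpair d hd d' hd' h.1 ?_
        by_cases hd_eq : lo d = hi d
        · rw [← hd_eq, ← h.2.mp hd_eq, h.1]
        · exact hhi_eq d hd d' hd' h.1 (lt_of_le_of_ne ((hloμ d hd).trans (hμhi d hd)) hd_eq)
            (lt_of_le_of_ne ((hloμ d' hd').trans (hμhi d' hd')) (mt h.2.mpr hd_eq))
    _ = 2 * A.card := by simp [mul_comm]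

theorem Finset.card_le_mul_card_of_card_fiber_le {ι α β : Type*} [DecidableEq β]
    (T : Finset ι) (S : Finset α) (f : ι → β) (g : α → β) (c : ℕ)
    (h : ∀ y, (T.filter (f · = y)).card ≤ c * (S.filter (g · = y)).card) :
    T.card ≤ c * S.card :=
  calc T.card = ∑ y ∈ T.image f, (T.filter (f · = y)).card :=
        Finset.card_eq_sum_card_fiberwise fun _ => Finset.mem_image_of_mem f
    _ ≤ ∑ y ∈ T.image f, c * (S.filter (g · = y)).card := Finset.sum_le_sum fun y _ => h y
    _ = c * (S.filter (g · ∈ T.image f)).card := by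
        rw [← Finset.mul_sum, Finset.sum_card_fiberwise_eq_card_filter]
    _ ≤ c * S.card := Nat.mul_le_mul_left c (Finset.card_filter_le _ _)

theorem mem_VSeg_of_le {a y₁ y₂ : ℝ} {z : Pt} (h : y₁ ≤ y₂) :
    z ∈ VSeg a y₁ y₂ ↔ z.1 = a ∧ z.2 ∈ Icc y₁ y₂ := by
  simp only [VSeg, Set.mem_ofPred_eq, min_eq_left h, max_eq_right h, Set.mem_Icc]

theorem not_subsingleton_VSeg_inter_of_Icc {a y₁ y₂ y₁' y₂' : ℝ} (h : y₁ ≤ y₂) (h' : y₁' ≤ y₂')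
    (hlt : max y₁ y₁' < min y₂ y₂') : ¬ (VSeg a y₁ y₂ ∩ VSeg a y₁' y₂').Subsingleton := fun hs => by
  have hmem : ∀ y ∈ Icc (max y₁ y₁') (min y₂ y₂'), ((a, y) : Pt) ∈ VSeg a y₁ y₂ ∩ VSeg a y₁' y₂' :=
    fun y hy => ⟨(mem_VSeg_of_le h).mpr
        ⟨rfl, (le_max_left _ _).trans hy.1, hy.2.trans (min_le_left _ _)⟩,
      (mem_VSeg_of_le h').mpr ⟨rfl, (le_max_right _ _).trans hy.1, hy.2.trans (min_le_right _ _)⟩⟩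
  exact hlt.ne (congrArg Prod.snd (hs (hmem _ ⟨le_rfl, hlt.le⟩) (hmem _ ⟨hlt.le, le_rfl⟩)))

/-- In a boundary independent set of upward demands, distinct demands have distinct left
(resp. right) endpoints. -/
theorem ISN_le_card (P : Finset Pt) (D : Set Dem)
    (hD : ∀ d ∈ D, d.1 ∈ P ∧ d.2 ∈ P ∧ d.1.2 < d.2.2) : ISN D ≤ P.card := by
  refine csSup_le ⟨0, ∅, by simp, rfl, Or.inl fun d hd => absurd hd (Finset.notMem_empty d)⟩ ?_
  rintro _ ⟨D', hD', rfl, hL | hR⟩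
  · refine Finset.card_le_card_of_injOn Prod.fst (fun d hd => (hD d (hD' hd)).1)
      fun d hd e he h => by_contra fun hne => ?_
    have hs := hL d hd e he hne
    have hd := (hD d (hD' hd)).2.2
    have he := (hD e (hD' he)).2.2
    simp only [LSeg, ← h] at hs he
    exact not_subsingleton_VSeg_inter_of_Icc hd.le he.le (by simpa using lt_min hd he) hs
  · refine Finset.card_le_card_of_injOn Prod.snd (fun d hd => (hD d (hD' hd)).2.1)
      fun d hd e he h => by_contra fun hne => ?_
    have hs := hR d hd e he hne
    have hd := (hD d (hD' hd)).2.2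
    have he := (hD e (hD' he)).2.2
    simp only [RSeg, ← h] at hs he
    exact not_subsingleton_VSeg_inter_of_Icc hd.le he.le (by simpa using max_lt hd he) hs

def revBits : ℕ → ℕ → ℕ
  | 0, _ => 0
  | n + 1, t => t % 2 * 2 ^ n + revBits n (t / 2)

theorem revBits_lt (n t : ℕ) : revBits n t < 2 ^ n := by
  induction n generalizing t with
  | zero => simp [revBits]
  | succ n ih =>
    have := ih (t / 2)
    rcases Nat.mod_two_eq_zero_or_one t with h | h <;> simp only [revBits, h, pow_succ] <;> omega

theorem revBits_add_two_pow_mul (ℓ n : ℕ) {u : ℕ} (hu : u < 2 ^ ℓ) (v : ℕ) :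
    revBits (ℓ + n) (u + 2 ^ ℓ * v) = revBits ℓ u * 2 ^ n + revBits n v := by
  induction ℓ generalizing u with
  | zero => simp [revBits, Nat.lt_one_iff.mp hu]
  | succ ℓ ih =>
    have hsplit : u + 2 ^ (ℓ + 1) * v = u + 2 * (2 ^ ℓ * v) := by ring
    rw [show ℓ + 1 + n = ℓ + n + 1 by omega, revBits, revBits, hsplit,
      Nat.add_mul_mod_self_left, Nat.add_mul_div_left _ _ two_pos,
      ih (Nat.div_lt_of_lt_mul (by rwa [← pow_succ'])), pow_add]
    ring

theorem revBits_injOn (n : ℕ) : Set.InjOn (revBits n) (Set.Iio (2 ^ n)) := by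
  induction n with
  | zero => intro a ha b hb _; simp_all
  | succ n ih =>
    intro a ha b hb h
    have ha' := revBits_lt n (a / 2)
    have hb' := revBits_lt n (b / 2)
    have hpar : a % 2 = b % 2 ∧ revBits n (a / 2) = revBits n (b / 2) := by
      rcases Nat.mod_two_eq_zero_or_one a with ha₂ | ha₂ <;>
        rcases Nat.mod_two_eq_zero_or_one b with hb₂ | hb₂ <;>
        simp only [revBits, ha₂, hb₂, zero_mul, one_mul, zero_add, true_and] at h ⊢ <;> omega
    have hdiv : a / 2 = b / 2 := ih (Nat.div_lt_of_lt_mul (by rw [← pow_succ']; exact ha))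
      (Nat.div_lt_of_lt_mul (by rw [← pow_succ']; exact hb)) hpar.2
    omega

def dyadicBlock (L c : ℕ) : Set ℝ := Icc ((c * L : ℕ) : ℝ) ((c * L + L : ℕ) - 1)

theorem natCast_mem_dyadicBlock {L c r : ℕ} (hr : r < L) :
    ((c * L + r : ℕ) : ℝ) ∈ dyadicBlock L c := by
  have : ((r + 1 : ℕ) : ℝ) ≤ L := by exact_mod_cast hr
  constructor <;> push_cast at * <;> linarith

theorem le_of_mem_dyadicBlock {L c c' : ℕ} {x : ℝ} (h : x ∈ dyadicBlock L c)
    (h' : x ∈ dyadicBlock L c') : c ≤ c' := by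
  obtain ⟨h₁, -⟩ := h
  obtain ⟨-, h₂⟩ := h'
  have hlt : ((c * L : ℕ) : ℝ) < ((c' + 1) * L : ℕ) := by push_cast at h₁ h₂ ⊢; linarith
  exact Nat.lt_succ_iff.mp (Nat.lt_of_mul_lt_mul_right (by exact_mod_cast hlt))

theorem eq_of_mem_dyadicBlock {L c c' : ℕ} {x : ℝ} (h : x ∈ dyadicBlock L c)
    (h' : x ∈ dyadicBlock L c') : c = c' :=
  (le_of_mem_dyadicBlock h h').antisymm (le_of_mem_dyadicBlock h' h)

theorem sub_half_not_mem_dyadicBlock {L N : ℕ} (c : ℕ) (h : L ∣ N) :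
    (N : ℝ) - 1 / 2 ∉ dyadicBlock L c := by
  obtain ⟨q, rfl⟩ := h
  intro ⟨h₁, h₂⟩
  have hlt : c * L < q * L := by
    have : ((c * L : ℕ) : ℝ) < ((q * L : ℕ) : ℝ) := by push_cast at h₁ ⊢; linarith
    exact_mod_cast this
  have hle : ((c * L + L : ℕ) : ℝ) ≤ ((L * q : ℕ) : ℝ) := by
    exact_mod_cast (by nlinarith [Nat.lt_of_mul_lt_mul_right hlt] : c * L + L ≤ L * q)
  linarith

noncomputable section

def rowXs (S : Finset Pt) (y : ℝ) : Finset ℝ := (S.filter (·.2 = y)).image Prod.fst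

theorem mem_rowXs {S : Finset Pt} {z : Pt} (hz : z ∈ S) {y : ℝ} (hy : z.2 = y) :
    z.1 ∈ rowXs S y :=
  Finset.mem_image_of_mem _ (Finset.mem_filter.mpr ⟨hz, hy⟩)

namespace BitRev

/-- `⟨(ℓ, m), (u, w)⟩` with `ℓ + m = n` stands for the demand of level `ℓ` between the times
`u + 2^ℓ (2w)` and `u + 2^ℓ (2w + 1)`, which differ exactly in bit `ℓ`. -/
abbrev Index := Σ _ : ℕ × ℕ, ℕ × ℕ

def index (n : ℕ) : Finset Index :=
  (antidiagonal n).sigma fun lm => range (2 ^ lm.1) ×ˢ range (2 ^ lm.2)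

def lowTime (σ : Index) : ℕ := σ.2.1 + 2 ^ σ.1.1 * (2 * σ.2.2)

def highTime (σ : Index) : ℕ := σ.2.1 + 2 ^ σ.1.1 * (2 * σ.2.2 + 1)

def point (n t : ℕ) : Pt := (revBits (n + 1) t, t)

def points (n : ℕ) : Finset Pt := (range (2 ^ (n + 1))).image (point n)

def demands (n : ℕ) : Finset Dem :=
  (index n).image fun σ => (point n (lowTime σ), point n (highTime σ))

/-- Both endpoints of a demand `σ` of level `ℓ` lie in this dyadic block of length
`2^(m+1) = 2^(n+1-ℓ)`, on either side of `mid σ`. -/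
def block (σ : Index) : Set ℝ := dyadicBlock (2 ^ (σ.1.2 + 1)) (revBits σ.1.1 σ.2.1)

def mid (σ : Index) : ℝ :=
  ((revBits σ.1.1 σ.2.1 * 2 ^ (σ.1.2 + 1) + 2 ^ σ.1.2 : ℕ) : ℝ) - 1 / 2

theorem mem_index {n ℓ m u w : ℕ} :
    (⟨(ℓ, m), (u, w)⟩ : Index) ∈ index n ↔ ℓ + m = n ∧ u < 2 ^ ℓ ∧ w < 2 ^ m := by
  simp [index]

theorem zero_mem_index (n : ℕ) : (⟨(0, n), (0, 0)⟩ : Index) ∈ index n :=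
  mem_index.mpr ⟨zero_add n, Nat.two_pow_pos 0, Nat.two_pow_pos n⟩

theorem card_points_le (n : ℕ) : (points n).card ≤ 2 ^ (n + 1) :=
  Finset.card_image_le.trans (card_range _).le

theorem card_index (n : ℕ) : (index n).card = (n + 1) * 2 ^ n := by
  rw [index, card_sigma, Finset.sum_congr rfl fun lm hlm => by
    rw [card_product, card_range, card_range, ← pow_add, mem_antidiagonal.mp hlm],
    sum_const, Finset.Nat.card_antidiagonal, smul_eq_mul]

theorem lowTime_lt_highTime (σ : Index) : lowTime σ < highTime σ :=
  Nat.add_lt_add_left (Nat.mul_lt_mul_of_pos_left (by omega) (Nat.two_pow_pos _)) _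

theorem highTime_lt_lowTime {ℓ m u w w' : ℕ} (hw : w < w') :
    highTime ⟨(ℓ, m), (u, w)⟩ < lowTime ⟨(ℓ, m), (u, w')⟩ :=
  show u + 2 ^ ℓ * (2 * w + 1) < u + 2 ^ ℓ * (2 * w') from
    Nat.add_lt_add_left (Nat.mul_lt_mul_of_pos_left (by omega) (Nat.two_pow_pos ℓ)) u

theorem mid_mem_block (σ : Index) : mid σ ∈ block σ := by
  have h : (1 : ℝ) ≤ 2 ^ σ.1.2 := one_le_pow₀ one_le_two
  constructor <;> simp only [mid] <;> push_cast <;> rw [pow_succ] <;> linarith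

section

variable {n : ℕ}

theorem highTime_lt {σ : Index} (hσ : σ ∈ index n) : highTime σ < 2 ^ (n + 1) := by
  obtain ⟨⟨ℓ, m⟩, u, w⟩ := σ
  obtain ⟨rfl, hu, hw⟩ := mem_index.mp hσ
  calc u + 2 ^ ℓ * (2 * w + 1) < 2 ^ ℓ * (2 * w + 2) := by linarith
    _ ≤ 2 ^ ℓ * 2 ^ (m + 1) := Nat.mul_le_mul_left _ (by rw [pow_succ]; omega)
    _ = 2 ^ (ℓ + m + 1) := by ring

theorem point_lowTime_fst {ℓ m u w : ℕ} (hσ : ⟨(ℓ, m), (u, w)⟩ ∈ index n) :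
    (point n (lowTime ⟨(ℓ, m), (u, w)⟩)).1 =
      ((revBits ℓ u * 2 ^ (m + 1) + revBits m w : ℕ) : ℝ) := by
  obtain ⟨rfl, hu, -⟩ := mem_index.mp hσ
  have h₂ : 2 * w / 2 = w := by omega
  rw [point, lowTime, show ℓ + m + 1 = ℓ + (m + 1) by ring, revBits_add_two_pow_mul ℓ (m + 1) hu,
    revBits.eq_2, Nat.mul_mod_right, h₂, zero_mul, zero_add]

theorem point_highTime_fst {ℓ m u w : ℕ} (hσ : ⟨(ℓ, m), (u, w)⟩ ∈ index n) :
    (point n (highTime ⟨(ℓ, m), (u, w)⟩)).1 =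
      ((revBits ℓ u * 2 ^ (m + 1) + (2 ^ m + revBits m w) : ℕ) : ℝ) := by
  obtain ⟨rfl, hu, -⟩ := mem_index.mp hσ
  have h₁ : (2 * w + 1) % 2 = 1 := by omega
  have h₂ : (2 * w + 1) / 2 = w := by omega
  rw [point, highTime, show ℓ + m + 1 = ℓ + (m + 1) by ring, revBits_add_two_pow_mul ℓ (m + 1) hu,
    revBits.eq_2, h₁, h₂, one_mul]

theorem point_fst_lt_mid_lt {σ : Index} (hσ : σ ∈ index n) :
    (point n (lowTime σ)).1 < mid σ ∧ mid σ < (point n (highTime σ)).1 := by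
  obtain ⟨⟨ℓ, m⟩, u, w⟩ := σ
  have hr : ((revBits m w + 1 : ℕ) : ℝ) ≤ 2 ^ m := by exact_mod_cast revBits_lt m w
  rw [point_lowTime_fst hσ, point_highTime_fst hσ, mid]
  push_cast at hr ⊢
  constructor <;> linarith

theorem Icc_point_fst_subset_block {σ : Index} (hσ : σ ∈ index n) :
    Icc (point n (lowTime σ)).1 (point n (highTime σ)).1 ⊆ block σ := by
  obtain ⟨⟨ℓ, m⟩, u, w⟩ := σ
  have hr := revBits_lt m w
  change _ ⊆ dyadicBlock (2 ^ (m + 1)) (revBits ℓ u)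
  refine Set.ordConnected_Icc.out ?_ ?_
  · rw [point_lowTime_fst hσ]
    exact natCast_mem_dyadicBlock (hr.trans (by rw [pow_succ]; omega))
  · rw [point_highTime_fst hσ]
    exact natCast_mem_dyadicBlock (by rw [pow_succ]; omega)

/-- For different levels, `mid σ` lies on a boundary between blocks of the finer level; for equal
levels the blocks coincide only when the demands differ in `w` alone, and then their time ranges
are disjoint. -/
theorem mid_not_mem_block {σ σ' : Index} (hσ : σ ∈ index n) (hσ' : σ' ∈ index n)
    (hne : σ ≠ σ') (hle : σ.1.1 ≤ σ'.1.1) {y : ℝ}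
    (hy : y ∈ Icc (lowTime σ : ℝ) (highTime σ)) (hy' : y ∈ Icc (lowTime σ' : ℝ) (highTime σ')) :
    mid σ ∉ block σ' := by
  obtain ⟨⟨ℓ, m⟩, u, w⟩ := σ
  obtain ⟨⟨ℓ', m'⟩, u', w'⟩ := σ'
  obtain ⟨hn, hu, -⟩ := mem_index.mp hσ
  obtain ⟨hn', hu', -⟩ := mem_index.mp hσ'
  dsimp only at hle
  intro hmid
  rcases hle.lt_or_eq with hlt | rfl
  · have hdvd : 2 ^ (m' + 1) ∣ revBits ℓ u * 2 ^ (m + 1) + 2 ^ m :=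
      (dvd_mul_of_dvd_right (pow_dvd_pow 2 (by omega)) _).add (pow_dvd_pow 2 (by omega))
    exact sub_half_not_mem_dyadicBlock (revBits ℓ' u') hdvd hmid
  obtain rfl : m = m' := by omega
  have hblock : revBits ℓ u = revBits ℓ u' :=
    eq_of_mem_dyadicBlock (L := 2 ^ (m + 1)) (mid_mem_block ⟨(ℓ, m), (u, w)⟩) hmid
  obtain rfl : u = u' := revBits_injOn ℓ hu hu' hblock
  have hw : w ≠ w' := by rintro rfl; exact hne rfl
  rcases hw.lt_or_gt with hw | hw
  · have := Nat.cast_lt (α := ℝ) |>.mpr (highTime_lt_lowTime (ℓ := ℓ) (m := m) (u := u) hw)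
    linarith [hy.2, hy'.1]
  · have := Nat.cast_lt (α := ℝ) |>.mpr (highTime_lt_lowTime (ℓ := ℓ) (m := m) (u := u) hw)
    linarith [hy.1, hy'.2]

theorem point_mem_points {t : ℕ} (ht : t < 2 ^ (n + 1)) : point n t ∈ points n :=
  Finset.mem_image_of_mem _ (Finset.mem_range.mpr ht)

theorem demands_spec {d : Dem} (hd : d ∈ demands n) :
    d.1 ∈ points n ∧ d.2 ∈ points n ∧ d.1.1 < d.2.1 ∧ d.1.2 < d.2.2 := by
  obtain ⟨σ, hσ, rfl⟩ := Finset.mem_image.mp hd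
  have hlt := lowTime_lt_highTime σ
  obtain ⟨hlo, hhi⟩ := point_fst_lt_mid_lt hσ
  exact ⟨point_mem_points (hlt.trans (highTime_lt hσ)), point_mem_points (highTime_lt hσ),
    hlo.trans hhi, Nat.cast_lt.mpr hlt⟩

theorem exists_row {Q : Finset Pt} (hQ : MFeasible ↑(points n) ↑(demands n) ↑Q)
    {σ : Index} (hσ : σ ∈ index n) :
    ∃ y ∈ Icc (lowTime σ : ℝ) (highTime σ), ∃ a ∈ rowXs (points n ∪ Q) y,
      ∃ a' ∈ rowXs (points n ∪ Q) y, a ∈ block σ ∧ a' ∈ block σ ∧ a ≤ mid σ ∧ mid σ ≤ a' := by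
  obtain ⟨hlo, hhi⟩ := point_fst_lt_mid_lt hσ
  obtain ⟨u, hu, v, hv, huv, huμ, hμv, huR, hvR⟩ :=
    (hQ _ (Finset.mem_image_of_mem _ hσ)).exists_horizontal_crossing hlo.le hhi
  rw [← Finset.coe_union, Finset.mem_coe] at hu hv
  rw [mem_Rect_of_le (hlo.trans hhi).le (Nat.cast_le.mpr (lowTime_lt_highTime σ).le)] at huR hvR
  exact ⟨u.2, huR.2, u.1, mem_rowXs hu rfl, v.1, mem_rowXs hv huv.symm,
    Icc_point_fst_subset_block hσ huR.1, Icc_point_fst_subset_block hσ hvR.1, huμ, hμv.le⟩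

theorem card_index_le {Q : Finset Pt} (hQ : MFeasible ↑(points n) ↑(demands n) ↑Q) :
    (index n).card ≤ 2 * (points n ∪ Q).card := by
  choose! row hrow hwit using fun σ (hσ : σ ∈ index n) => exists_row hQ hσ
  refine Finset.card_le_mul_card_of_card_fiber_le _ _ row Prod.snd 2 fun y => ?_
  calc ((index n).filter (row · = y)).card ≤ 2 * (rowXs (points n ∪ Q) y).card := by
        refine card_le_two_mul_card_of_separated _ _ block mid (fun _ _ => Set.ordConnected_Icc)
          (fun σ hσ => ?_) fun σ hσ σ' hσ' hne => ?_
        · obtain ⟨hσI, rfl⟩ := Finset.mem_filter.mp hσ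
          exact hwit σ hσI
        obtain ⟨hσI, rfl⟩ := Finset.mem_filter.mp hσ
        obtain ⟨hσI', hrow'⟩ := Finset.mem_filter.mp hσ'
        have hy' := hrow' ▸ hrow σ' hσI'
        rcases le_total σ.1.1 σ'.1.1 with hle | hle
        · exact Or.inl (mid_not_mem_block hσI hσI' hne hle (hrow σ hσI) hy')
        · exact Or.inr (mid_not_mem_block hσI' hσI hne.symm hle hy' (hrow σ hσI))
    _ ≤ 2 * ((points n ∪ Q).filter (·.2 = y)).card := Nat.mul_le_mul_left 2 Finset.card_image_le

/-- The level-`0` demand between the times `0` and `1` has no further input point in its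
rectangle. -/
theorem nonempty_of_feasible {Q : Finset Pt} (hQ : MFeasible ↑(points n) ↑(demands n) ↑Q) :
    Q.Nonempty := by
  obtain ⟨hlo, hhi⟩ := point_fst_lt_mid_lt (zero_mem_index n)
  obtain ⟨z, hz, hzR, hz₀, hz₁⟩ :=
    (hQ _ (Finset.mem_image_of_mem _ (zero_mem_index n))).exists_mem_Rect_ne
    (hlo.trans hhi) (by simp [point, lowTime, highTime])
  rcases hz with hzP | hzQ
  · obtain ⟨t, -, rfl⟩ := Finset.mem_image.mp hzP
    have ht := ((mem_Rect_of_le (hlo.trans hhi).le (by simp [point, lowTime, highTime])).mp hzR).2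
    have ht₁ : (t : ℝ) ≤ (1 : ℕ) := ht.2
    obtain rfl | rfl : t = 0 ∨ t = 1 := by have := Nat.cast_le.mp ht₁; omega
    · exact (hz₀ rfl).elim
    · exact (hz₁ rfl).elim
  · exact ⟨z, hzQ⟩

theorem add_two_mul_two_pow_succ_le_card {Q : Finset Pt}
    (hQ : MFeasible ↑(points n) ↑(demands n) ↑Q) : (n + 2) * 2 ^ (n + 1) ≤ 80 * Q.card := by
  have hcount : (n + 1) * 2 ^ n ≤ 2 * (2 ^ (n + 1) + Q.card) :=
    card_index n ▸ (card_index_le hQ).trans (Nat.mul_le_mul_left 2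
      ((Finset.card_union_le _ _).trans (Nat.add_le_add_right (card_points_le n) _)))
  have hQ₁ : 1 ≤ Q.card := Finset.one_le_card.mpr (nonempty_of_feasible hQ)
  -- for small `n` the nonemptiness of `Q` suffices, for large `n` the row count
  rcases le_or_gt n 3 with hn | hn
  · interval_cases n <;> omega
  · have h4 : 4 * 2 ^ n ≤ n * 2 ^ n := Nat.mul_le_mul_right _ hn
    rw [pow_succ] at hcount ⊢
    nlinarith

end

theorem isInstance (n : ℕ) : IsInstance (points n) (demands n) := fun _ hd =>
  ⟨(demands_spec hd).1, (demands_spec hd).2.1, (demands_spec hd).2.2.1⟩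

theorem distinctY_points (n : ℕ) : DistinctY (points n) := by
  intro p hp q hq hne hy
  obtain ⟨t, -, rfl⟩ := Finset.mem_image.mp hp
  obtain ⟨t', -, rfl⟩ := Finset.mem_image.mp hq
  exact hne (congrArg (point n) (Nat.cast_injective hy))

theorem demands_nonempty (n : ℕ) : (demands n).Nonempty :=
  ⟨_, Finset.mem_image_of_mem _ (zero_mem_index n)⟩

theorem ISN_demands_le (n : ℕ) : ISN ↑(demands n) ≤ 2 ^ (n + 1) :=
  (ISN_le_card _ _ fun _ hd => ⟨(demands_spec hd).1, (demands_spec hd).2.1,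
    (demands_spec hd).2.2.2⟩).trans (card_points_le n)

end BitRev

end

theorem Real.logb_natCast_lt_natLog_add_one (b s : ℕ) : Real.logb b s < Nat.log b s + 1 :=
  Real.natFloor_logb_natCast b s ▸ Nat.lt_floor_add_one _

/-- There is an absolute constant `c > 0` such that for every `s ≥ 2` there is an
`s`-thin MinGMConn instance with nonempty demand set satisfying
`opt(P,D) ≥ c·(log₂ s)·IS(P,D)`. -/
theorem stmt7 : ∃ c : ℝ, 0 < c ∧
    ∀ s : ℕ, 2 ≤ s →
    ∃ (P : Finset Pt) (D : Finset Dem),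
      IsInstance P D ∧ DistinctY P ∧ D.Nonempty ∧ (P.image Prod.fst).card ≤ s ∧
      ∀ Q : Finset Pt, MFeasible ↑P ↑D ↑Q →
        c * Real.logb 2 s * (ISN ↑D : ℝ) ≤ (Q.card : ℝ) := by
  refine ⟨1 / 80, by norm_num, fun s hs => ?_⟩
  obtain ⟨n, hn⟩ : ∃ n, Nat.log 2 s = n + 1 :=
    ⟨_, (Nat.succ_pred_eq_of_pos (Nat.log_pos one_lt_two hs)).symm⟩
  refine ⟨BitRev.points n, BitRev.demands n, BitRev.isInstance n, BitRev.distinctY_points n,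
    BitRev.demands_nonempty n, Finset.card_image_le.trans ((BitRev.card_points_le n).trans
      (hn ▸ Nat.pow_log_le_self 2 (by omega))), fun Q hQ => ?_⟩
  have hlog : Real.logb 2 s ≤ n + 2 := by
    have := Real.logb_natCast_lt_natLog_add_one 2 s
    push_cast [hn] at this
    linarith
  have hIS : (ISN ↑(BitRev.demands n) : ℝ) ≤ 2 ^ (n + 1) := by
    exact_mod_cast BitRev.ISN_demands_le n
  have hQ' : ((n + 2) * 2 ^ (n + 1) : ℝ) ≤ 80 * Q.card := by
    exact_mod_cast BitRev.add_two_mul_two_pow_succ_le_card hQ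
  calc 1 / 80 * Real.logb 2 s * (ISN ↑(BitRev.demands n) : ℝ)
      ≤ 1 / 80 * (n + 2) * 2 ^ (n + 1) := by gcongr
    _ ≤ Q.card := by linarith
end

section
/- Let (P,D) be a MinGMConn instance (input points with pairwise distinct y-coordinates) with strip subdivision 𝒮, and let Q be a feasible solution to the inter-strip instance π_𝒮(P,D). Then for every demand (p,q) ∈ D such that p and q lie in different strips of 𝒮, the points p and q are M-connected in P ∪ π_𝒮(P) ∪ Q; that is, Q ∪ π_𝒮(P) satisfies all demands of D whose endpoints lie in different strips. -/
/-!
A demand `(p, q)` with `p` in strip `i` and `q` in a later strip `j` is routed horizontally from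
`p` to its projection `a` onto the right boundary of strip `i`, then from `a` to the projection
`a'` of `q` onto the left boundary of strip `j`, and horizontally on to `q`. If the strips are
adjacent, `a` and `a'` lie on the same boundary line and are vertically aligned; otherwise
`(a, a')` is a demand of the inter-strip instance, which `Q` satisfies. Since
`x(p) ≤ x(a) ≤ x(a') ≤ x(q)` and the outer legs are horizontal, the three pieces compose to a
monotone path.
-/

lemma abs_sub_add_abs_sub_of_mem_uIcc {a b c : ℝ} (h : c ∈ Set.uIcc a b) :
    |a - c| + |c - b| = |a - b| := by
  have := dist_add_dist_of_mem_segment (E := ℝ) (segment_eq_uIcc a b ▸ h)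
  rwa [Real.dist_eq, Real.dist_eq, Real.dist_eq] at this

lemma dist1_add_dist1_of_mem_Rect {p m q : Pt} (h : m ∈ Rect p q) :
    dist1 p m + dist1 m q = dist1 p q := by
  obtain ⟨h1, h2, h3, h4⟩ := h
  have hx := abs_sub_add_abs_sub_of_mem_uIcc (show m.1 ∈ Set.uIcc p.1 q.1 from ⟨h1, h2⟩)
  have hy := abs_sub_add_abs_sub_of_mem_uIcc (show m.2 ∈ Set.uIcc p.2 q.2 from ⟨h3, h4⟩)
  simp only [dist1]
  linarith

lemma MConnected.mono {S T : Set Pt} (hST : S ⊆ T) {p q : Pt}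
    (h : MConnected S p q) : MConnected T p q := by
  obtain ⟨k, f, h0, hl, hm, ha, hs⟩ := h
  exact ⟨k, f, h0, hl, fun i => hST (hm i), ha, hs⟩

lemma MConnected.of_aligned {S : Set Pt} {p q : Pt} (h : Aligned p q)
    (hp : p ∈ S) (hq : q ∈ S) : MConnected S p q := by
  refine ⟨1, ![p, q], rfl, rfl, ?_, ?_, ?_⟩
  · intro i; fin_cases i <;> simpa
  · intro i; fin_cases i; simpa
  · simp

lemma MConnected.cons {S : Set Pt} {p a q : Pt} (h : MConnected S a q)
    (hp : p ∈ S) (hal : Aligned p a)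
    (hd : dist1 p a + dist1 a q = dist1 p q) : MConnected S p q := by
  obtain ⟨k, f, h0, hl, hm, ha, hs⟩ := h
  refine ⟨k + 1, Fin.cases p f, ?_, ?_, ?_, ?_, ?_⟩
  · simp
  · rw [← Fin.succ_last]; exact hl
  · intro i
    induction i using Fin.cases with
    | zero => simpa
    | succ j => simpa using hm j
  · intro i
    induction i using Fin.cases with
    | zero =>
        simpa only [Fin.castSucc_zero, Fin.cases_zero, Fin.cases_succ, h0] using hal
    | succ j => simpa [← Fin.succ_castSucc] using ha j
  · rw [Fin.sum_univ_succ, ← hd, ← hs, ← h0]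
    simp only [Fin.castSucc_zero, Fin.castSucc_succ, Fin.cases_zero, Fin.cases_succ]

lemma MConnected.snoc {S : Set Pt} {p a q : Pt} (h : MConnected S p a)
    (hq : q ∈ S) (hal : Aligned a q)
    (hd : dist1 p a + dist1 a q = dist1 p q) : MConnected S p q := by
  obtain ⟨k, f, h0, hl, hm, ha, hs⟩ := h
  refine ⟨k + 1, Fin.snoc f q, ?_, ?_, ?_, ?_, ?_⟩
  · rw [show (0 : Fin (k + 2)) = Fin.castSucc 0 from rfl, Fin.snoc_castSucc, h0]
  · simp
  · intro i
    induction i using Fin.lastCases with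
    | last => simpa
    | cast j => simpa using hm j
  · intro i
    induction i using Fin.lastCases with
    | last => simpa [Fin.succ_last, hl] using hal
    | cast j => simpa [Fin.succ_castSucc, -Fin.castSucc_succ] using ha j
  · rw [Fin.sum_univ_castSucc, ← hd, ← hs, ← hl]
    simp [Fin.succ_castSucc, -Fin.castSucc_succ]

lemma MConnected.extend_horizontal {S : Set Pt} {p a a' q : Pt} (h : MConnected S a a')
    (hp : p ∈ S) (hq : q ∈ S) (ha : a.2 = p.2) (ha' : a'.2 = q.2)
    (hpa : p.1 ≤ a.1) (haa' : a.1 ≤ a'.1) (ha'q : a'.1 ≤ q.1) : MConnected S p q := by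
  have ha'_mem : a' ∈ Rect a q :=
    ⟨min_le_of_left_le haa', le_max_of_le_right ha'q, ha' ▸ min_le_right _ _,
      ha' ▸ le_max_right _ _⟩
  have ha_mem : a ∈ Rect p q :=
    ⟨min_le_of_left_le hpa, le_max_of_le_right (haa'.trans ha'q), ha ▸ min_le_left _ _,
      ha ▸ le_max_left _ _⟩
  exact (h.snoc hq (Or.inr ha') (dist1_add_dist1_of_mem_Rect ha'_mem)).cons hp
    (Or.inr ha.symm) (dist1_add_dist1_of_mem_Rect ha_mem)

lemma IsStripSubdivision.coe_toReal {s : ℕ} {b : Fin (s + 1) → EReal} {P : Finset Pt}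
    (hb : IsStripSubdivision s b P) {k : Fin (s + 1)} (h0 : k ≠ 0) (hl : k ≠ Fin.last s) :
    ((b k).toReal : EReal) = b k := by
  obtain ⟨-, hmono, hb0, hbl, -⟩ := hb
  exact EReal.coe_toReal (hbl ▸ hmono.injective.ne hl) (hb0 ▸ hmono.injective.ne h0)

lemma strip_index_le {s : ℕ} {b : Fin (s + 1) → EReal} (hb : Monotone b) {i j : Fin s}
    {p q : Pt} (hp : p ∈ strip s b i) (hq : q ∈ strip s b j) (hpq : p.1 ≤ q.1) : i ≤ j := by
  by_contra! hji
  have : (q.1 : EReal) < p.1 :=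
    hq.2.trans_le ((hb (Fin.succ_le_castSucc_iff.2 hji)).trans hp.1.le)
  exact (EReal.coe_lt_coe_iff.1 this).not_ge hpq

lemma mconnected_strip_projections {P : Finset Pt} {D : Finset Dem} {s : ℕ}
    {b : Fin (s + 1) → EReal} {Q : Finset Pt}
    (hQ : MFeasible (stripProj s b ↑P) (stripDem s b ↑D) ↑Q) {d : Dem} (hd : d ∈ D)
    (hpP : d.1 ∈ P) (hqP : d.2 ∈ P) {i j : Fin s} (hpi : d.1 ∈ strip s b i)
    (hqj : d.2 ∈ strip s b j) (hij : i < j) :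
    MConnected (↑P ∪ stripProj s b ↑P ∪ ↑Q)
      ((b i.succ).toReal, d.1.2) ((b j.castSucc).toReal, d.2.2) := by
  have hij' := Fin.lt_def.1 hij
  have hjs := j.isLt
  have ha : ((b i.succ).toReal, d.1.2) ∈ stripProj s b ↑P :=
    ⟨d.1, hpP, i, hpi, Or.inr ⟨by omega, rfl⟩⟩
  have ha' : ((b j.castSucc).toReal, d.2.2) ∈ stripProj s b ↑P :=
    ⟨d.2, hqP, j, hqj, Or.inl ⟨by omega, rfl⟩⟩
  rcases (Fin.succ_le_castSucc_iff.2 hij).eq_or_lt with hadj | hfar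
  · rw [hadj] at ha ⊢
    exact .of_aligned (Or.inl rfl) (.inl (.inr ha)) (.inl (.inr ha'))
  · have hdem : (((b i.succ).toReal, d.1.2), ((b j.castSucc).toReal, d.2.2)) ∈
        stripDem s b ↑D :=
      ⟨d, hd, i, j, hpi, hqj, by simp [Fin.lt_def] at hfar; omega, rfl⟩
    exact (hQ _ hdem).mono (Set.union_subset_union_left _ Set.subset_union_right)

theorem stmt9_general (P : Finset Pt) (D : Finset Dem)
    (hinst : IsInstance P D)
    (s : ℕ) (b : Fin (s + 1) → EReal) (hb : IsStripSubdivision s b P)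
    (Q : Finset Pt)
    (hQ : MFeasible (stripProj s b ↑P) (stripDem s b ↑D) ↑Q) :
    ∀ d ∈ D, (∃ i j : Fin s, i ≠ j ∧ d.1 ∈ strip s b i ∧ d.2 ∈ strip s b j) →
      MConnected (↑P ∪ stripProj s b ↑P ∪ ↑Q) d.1 d.2 := by
  rintro d hd ⟨i, j, hne, hpi, hqj⟩
  obtain ⟨hpP, hqP, hpq⟩ := hinst d hd
  have hij : i < j := (strip_index_le hb.2.1.monotone hpi hqj hpq.le).lt_of_ne hne
  have hsucc_le : i.succ ≤ j.castSucc := Fin.succ_le_castSucc_iff.2 hij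
  have hc₁ := hb.coe_toReal (Fin.succ_ne_zero i) (hsucc_le.trans_lt (Fin.castSucc_lt_last j)).ne
  have hc₂ := hb.coe_toReal ((Fin.succ_pos i).trans_le hsucc_le).ne' (Fin.castSucc_lt_last j).ne
  refine (mconnected_strip_projections hQ hd hpP hqP hpi hqj hij).extend_horizontal
    (.inl (.inl hpP)) (.inl (.inl hqP)) rfl rfl ?_ ?_ ?_
  · rw [← EReal.coe_le_coe_iff, hc₁]
    exact hpi.2.le
  · rw [← EReal.coe_le_coe_iff, hc₁, hc₂]
    exact hb.2.1.monotone hsucc_le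
  · rw [← EReal.coe_le_coe_iff, hc₂]
    exact hqj.1.le

/-- If `Q` is a feasible solution to the inter-strip instance `π_𝒮(P,D)`, then
`Q ∪ π_𝒮(P)` satisfies all demands of `D` whose endpoints lie in different strips. -/
theorem stmt9 (P : Finset Pt) (D : Finset Dem)
    (hinst : IsInstance P D) (hY : DistinctY P)
    (s : ℕ) (b : Fin (s + 1) → EReal) (hb : IsStripSubdivision s b P)
    (Q : Finset Pt)
    (hQ : MFeasible (stripProj s b ↑P) (stripDem s b ↑D) ↑Q) :
    ∀ d ∈ D, (∃ i j : Fin s, i ≠ j ∧ d.1 ∈ strip s b i ∧ d.2 ∈ strip s b j) →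
      MConnected (↑P ∪ stripProj s b ↑P ∪ ↑Q) d.1 d.2 :=
  stmt9_general P D hinst s b hb Q hQ
end

section
/- For every n ≥ 1 and every triangular instance (P_Δ, D_Δ) of size n, the minimum cardinality of a feasible solution equals n, i.e. opt(P_Δ, D_Δ) = n. -/
/-!
The corners `(x(p₀), y(pᵢ))`, `1 ≤ i ≤ n`, form a solution of size `n`. For the lower bound,
regard every point as an edge between the vertical and the horizontal line through it. A path
of length `‖pᵢ - p₀‖₁` is monotone, so it stays below and to the left of `pᵢ` and meets no other
input point: all its points but `pᵢ` lie in `Q ∪ {p₀}`, and consecutive ones share a line. Hence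
the component of the lines of `p₀` in the graph of `Q ∪ {p₀}` contains a line through every
`pᵢ`. The coordinates of a triangular instance are distinct, so this component has at least
`n + 2` vertices, and being connected it has at least `n + 1` edges: `|Q| + 1 ≥ n + 1`.
-/

open Finset SimpleGraph

theorem Fin.sum_succ_sub_castSucc {M : Type*} [AddCommGroup M] :
    ∀ {k : ℕ} (g : Fin (k + 1) → M), ∑ i : Fin k, (g i.succ - g i.castSucc) = g (last k) - g 0
  | 0, g => by simp
  | k + 1, g => by
    rw [Fin.sum_univ_castSucc]
    simp only [Fin.succ_castSucc]
    rw [Fin.sum_succ_sub_castSucc fun i => g i.castSucc]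
    simp

theorem SimpleGraph.ConnectedComponent.card_supp_le_card_edgeSet_add_one {V : Type*}
    {G : SimpleGraph V} [Finite G.edgeSet] (C : G.ConnectedComponent) :
    Nat.card C.supp ≤ Nat.card G.edgeSet + 1 :=
  C.connected_toSimpleGraph.card_vert_le_card_edgeSet_add_one.trans <| by
    gcongr
    exact Nat.card_le_card_of_injective _ (Embedding.induce C.supp).mapEdgeSet.injective

theorem SimpleGraph.ConnectedComponent.supp_subset_insert_support {V : Type*}
    {G : SimpleGraph V} (C : G.ConnectedComponent) {v : V} (hv : v ∈ C.supp) :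
    C.supp ⊆ insert v G.support := by
  intro w hw
  by_cases hwv : w = v
  · exact Or.inl hwv
  · exact Or.inr (mem_support_of_reachable hwv (C.reachable_of_mem_supp hw hv))

theorem sub_add_sub_le_dist1 (a b : Pt) : (b.1 - a.1) + (b.2 - a.2) ≤ dist1 a b := by
  rw [dist1, abs_sub_comm a.1, abs_sub_comm a.2]
  exact add_le_add (le_abs_self _) (le_abs_self _)

theorem dist1_eq_sub_add_sub_iff {a b : Pt} :
    dist1 a b = (b.1 - a.1) + (b.2 - a.2) ↔ a ≤ b := by
  rw [dist1, abs_sub_comm a.1, abs_sub_comm a.2, Prod.le_def]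
  have h1 := le_abs_self (b.1 - a.1)
  have h2 := le_abs_self (b.2 - a.2)
  constructor
  · intro h
    constructor
    · have : |b.1 - a.1| = b.1 - a.1 := by linarith
      linarith [abs_nonneg (b.1 - a.1)]
    · have : |b.2 - a.2| = b.2 - a.2 := by linarith
      linarith [abs_nonneg (b.2 - a.2)]
  · rintro ⟨hx, hy⟩
    rw [abs_of_nonneg (sub_nonneg.2 hx), abs_of_nonneg (sub_nonneg.2 hy)]

theorem monotone_of_sum_dist1_eq {k : ℕ} {f : Fin (k + 1) → Pt} (hle : f 0 ≤ f (Fin.last k))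
    (hsum : ∑ i : Fin k, dist1 (f i.castSucc) (f i.succ) = dist1 (f 0) (f (Fin.last k))) :
    Monotone f := by
  have htel : ∑ i : Fin k, (((f i.succ).1 - (f i.castSucc).1) + ((f i.succ).2 - (f i.castSucc).2))
      = ∑ i : Fin k, dist1 (f i.castSucc) (f i.succ) := by
    rw [hsum, dist1_eq_sub_add_sub_iff.2 hle, Finset.sum_add_distrib,
      Fin.sum_succ_sub_castSucc fun j => (f j).1, Fin.sum_succ_sub_castSucc fun j => (f j).2]
  have hstep := (Finset.sum_eq_sum_iff_of_le fun i _ => sub_add_sub_le_dist1 _ _).1 htel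
  rw [Fin.monotone_iff_le_succ]
  exact fun i => dist1_eq_sub_add_sub_iff.1 (hstep i (mem_univ i)).symm

theorem mConnected_of_corner_mem {S : Set Pt} {a b : Pt} (ha : a ∈ S) (hb : b ∈ S)
    (hc : (a.1, b.2) ∈ S) : MConnected S a b := by
  refine ⟨2, ![a, (a.1, b.2), b], rfl, rfl, ?_, ?_, ?_⟩
  · intro j
    fin_cases j <;> assumption
  · intro j
    fin_cases j
    exacts [Or.inl rfl, Or.inr rfl]
  · simp [Fin.sum_univ_two, dist1, add_comm]

/-- Vertices are the vertical lines `inl x` and the horizontal lines `inr y`; every point of `S`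
is the edge joining the two lines through it. -/
def rowColumnGraph (S : Set Pt) : SimpleGraph (ℝ ⊕ ℝ) :=
  fromEdgeSet ((fun z : Pt => s(Sum.inl z.1, Sum.inr z.2)) '' S)

section RowColumnGraph

variable {S : Set Pt}

theorem rowColumnGraph_adj_of_mem {z : Pt} (hz : z ∈ S) :
    (rowColumnGraph S).Adj (Sum.inl z.1) (Sum.inr z.2) := by
  rw [rowColumnGraph, fromEdgeSet_adj]
  exact ⟨⟨z, hz, rfl⟩, Sum.inl_ne_inr⟩

theorem edgeSet_rowColumnGraph_subset :
    (rowColumnGraph S).edgeSet ⊆ (fun z : Pt => s(Sum.inl z.1, Sum.inr z.2)) '' S := by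
  rw [rowColumnGraph, edgeSet_fromEdgeSet]
  exact Set.sdiff_subset

theorem support_rowColumnGraph_subset :
    (rowColumnGraph S).support ⊆ Sum.inl '' (Prod.fst '' S) ∪ Sum.inr '' (Prod.snd '' S) := by
  intro v hv
  obtain ⟨w, hvw⟩ := (mem_support _).1 hv
  obtain ⟨z, hz, hzvw⟩ := edgeSet_rowColumnGraph_subset ((rowColumnGraph S).mem_edgeSet.2 hvw)
  rcases Sym2.eq_iff.1 hzvw with ⟨rfl, -⟩ | ⟨-, rfl⟩
  · exact Or.inl ⟨z.1, ⟨z, hz, rfl⟩, rfl⟩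
  · exact Or.inr ⟨z.2, ⟨z, hz, rfl⟩, rfl⟩

theorem finite_edgeSet_rowColumnGraph (hS : S.Finite) : (rowColumnGraph S).edgeSet.Finite :=
  (hS.image _).subset edgeSet_rowColumnGraph_subset

theorem card_edgeSet_rowColumnGraph_le (hS : S.Finite) :
    Nat.card (rowColumnGraph S).edgeSet ≤ S.ncard := by
  rw [Nat.card_coe_set_eq]
  exact (Set.ncard_le_ncard edgeSet_rowColumnGraph_subset (hS.image _)).trans
    (Set.ncard_image_le hS)

variable (C : (rowColumnGraph S).ConnectedComponent)

theorem finite_supp_rowColumnGraph (hS : S.Finite) {z : Pt} (hz : z ∈ S)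
    (hzC : Sum.inl z.1 ∈ C.supp) : C.supp.Finite := by
  refine (((hS.image _).image _).union ((hS.image _).image _)).subset
    ((C.supp_subset_insert_support hzC).trans (Set.insert_subset ?_ support_rowColumnGraph_subset))
  exact Or.inl ⟨z.1, ⟨z, hz, rfl⟩, rfl⟩

theorem mem_supp_of_aligned {z w : Pt} (hz : z ∈ S)
    (hzC : Sum.inl z.1 ∈ C.supp ∨ Sum.inr z.2 ∈ C.supp) (hzw : Aligned z w) :
    Sum.inl w.1 ∈ C.supp ∨ Sum.inr w.2 ∈ C.supp := by
  have hlines := C.mem_supp_congr_adj (rowColumnGraph_adj_of_mem hz)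
  rcases hzw with hx | hy
  · exact Or.inl (hx ▸ hzC.elim id hlines.2)
  · exact Or.inr (hy ▸ hzC.elim hlines.1 id)

theorem mem_supp_of_chain {k : ℕ} {f : Fin (k + 1) → Pt} {b : Pt}
    (hf : ∀ j, f j ∈ S ∨ f j = b) (hal : ∀ i : Fin k, Aligned (f i.castSucc) (f i.succ))
    (h0 : Sum.inl (f 0).1 ∈ C.supp ∨ Sum.inr (f 0).2 ∈ C.supp) (hlast : f (Fin.last k) = b) :
    Sum.inl b.1 ∈ C.supp ∨ Sum.inr b.2 ∈ C.supp := by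
  have key : ∀ j, (Sum.inl (f j).1 ∈ C.supp ∨ Sum.inr (f j).2 ∈ C.supp) ∨
      (Sum.inl b.1 ∈ C.supp ∨ Sum.inr b.2 ∈ C.supp) := by
    refine Fin.induction (Or.inl h0) fun i hi => ?_
    rcases hi with hi | hb
    · rcases hf i.castSucc with hS | hb
      · exact Or.inl (mem_supp_of_aligned C hS hi (hal i))
      · exact Or.inr (hb ▸ hi)
    · exact Or.inr hb
  simpa [hlast] using key (Fin.last k)

end RowColumnGraph

namespace IsTriangular

variable {n : ℕ} {p : Fin (n + 1) → Pt}

theorem fst_injective (htri : IsTriangular n p) : Function.Injective fun i => (p i).1 :=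
  StrictMono.injective fun _ _ hij => htri.1 _ _ hij

theorem snd_injective (htri : IsTriangular n p) : Function.Injective fun i => (p i).2 := by
  have hlt : ∀ i j, i < j → (p j).2 ≠ (p i).2 := by
    intro i j hij
    rcases eq_or_ne i 0 with rfl | hi
    · exact (htri.2.2 j (Fin.pos_iff_ne_zero.1 hij)).ne'
    · exact (htri.2.1 i j hi hij).ne
  intro i j hij
  rcases lt_trichotomy i j with h | h | h
  exacts [absurd hij.symm (hlt i j h), h, absurd hij (hlt j i h)]

theorem mem_triD {d : Dem} : d ∈ triD n p ↔ ∃ i, i ≠ 0 ∧ (p 0, p i) = d := by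
  simp [triD]

theorem mFeasible_corners :
    MFeasible ↑(triP n p) ↑(triD n p) ↑(univ.image fun i : Fin n => ((p 0).1, (p i.succ).2)) := by
  intro d hd
  obtain ⟨i, hi, rfl⟩ := mem_triD.1 hd
  obtain ⟨j, rfl⟩ := Fin.exists_succ_eq.2 hi
  exact mConnected_of_corner_mem (Or.inl (by simp [triP])) (Or.inl (by simp [triP]))
    (Or.inr (by simp))

theorem card_corners (htri : IsTriangular n p) :
    (univ.image fun i : Fin n => ((p 0).1, (p i.succ).2)).card = n := by
  have hinj : Function.Injective fun i : Fin n => ((p 0).1, (p i.succ).2) := fun i j hij =>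
    Fin.succ_injective _ (htri.snd_injective (Prod.ext_iff.1 hij).2)
  rw [card_image_of_injective univ hinj, card_univ, Fintype.card_fin]

theorem mem_or_eq_of_le (htri : IsTriangular n p) {Q : Finset Pt} {i : Fin (n + 1)} {z : Pt}
    (hz : z ∈ (↑(triP n p) ∪ ↑Q : Set Pt)) (hzi : z ≤ p i) :
    z ∈ (↑(insert (p 0) Q) : Set Pt) ∨ z = p i := by
  rcases hz with hP | hQ
  · obtain ⟨m, rfl⟩ : ∃ m, p m = z := by simpa [triP] using hP
    rcases lt_trichotomy m i with hmi | rfl | him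
    · rcases eq_or_ne m 0 with rfl | hm
      · exact Or.inl (mem_insert_self _ _)
      · exact absurd hzi.2 (htri.2.1 m i hm hmi).not_ge
    · exact Or.inr rfl
    · exact absurd hzi.1 (htri.1 i m him).not_ge
  · exact Or.inl (mem_insert_of_mem hQ)

theorem line_mem_supp_of_mConnected (htri : IsTriangular n p) {Q : Finset Pt}
    {i : Fin (n + 1)} (hi : i ≠ 0) (C : (rowColumnGraph ↑(insert (p 0) Q)).ConnectedComponent)
    (hC : Sum.inl (p 0).1 ∈ C.supp) (h : MConnected (↑(triP n p) ∪ ↑Q) (p 0) (p i)) :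
    Sum.inl (p i).1 ∈ C.supp ∨ Sum.inr (p i).2 ∈ C.supp := by
  obtain ⟨k, f, hf0, hfl, hfS, hal, hsum⟩ := h
  have h0i : p 0 ≤ p i := ⟨(htri.1 0 i (Fin.pos_iff_ne_zero.2 hi)).le, (htri.2.2 i hi).le⟩
  have hmono : Monotone f :=
    monotone_of_sum_dist1_eq (by rwa [hf0, hfl]) (by rwa [hf0, hfl])
  exact mem_supp_of_chain C
    (fun j => htri.mem_or_eq_of_le (hfS j) ((hmono (Fin.le_last j)).trans_eq hfl)) hal
    (Or.inl (by rwa [hf0])) hfl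

theorem add_two_le_ncard (htri : IsTriangular n p) {U : Set (ℝ ⊕ ℝ)} (hU : U.Finite)
    (h0 : Sum.inl (p 0).1 ∈ U) (h0' : Sum.inr (p 0).2 ∈ U)
    (hi : ∀ i ≠ 0, Sum.inl (p i).1 ∈ U ∨ Sum.inr (p i).2 ∈ U) :
    n + 2 ≤ U.ncard := by
  classical
  -- preferring the vertical line keeps `v 0` distinct from `inr y(p₀)`
  let v : Fin (n + 1) → ℝ ⊕ ℝ := fun i =>
    if Sum.inl (p i).1 ∈ U then Sum.inl (p i).1 else Sum.inr (p i).2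
  have hvU : ∀ i, v i ∈ U := by
    intro i
    by_cases h : Sum.inl (p i).1 ∈ U
    · simp [v, h]
    · have hi0 : i ≠ 0 := by rintro rfl; exact h h0
      simpa [v, h] using (hi i hi0).resolve_left h
  have hvinj : Function.Injective v := by
    intro i j hij
    simp only [v] at hij
    split_ifs at hij <;> simp only [Sum.inl.injEq, Sum.inr.injEq] at hij
    exacts [htri.fst_injective hij, htri.snd_injective hij]
  have hnot : Sum.inr (p 0).2 ∉ univ.image v := by
    simp only [mem_image, mem_univ, true_and, not_exists]
    intro i hvi
    by_cases h : Sum.inl (p i).1 ∈ U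
    · simp [v, h] at hvi
    · have hi0 : i = 0 := htri.snd_injective (by simpa [v, h] using hvi)
      exact h (hi0 ▸ h0)
  calc n + 2 = (insert (Sum.inr (p 0).2) (univ.image v)).card := by
        rw [card_insert_of_notMem hnot, card_image_of_injective _ hvinj, card_univ,
          Fintype.card_fin]
    _ ≤ U.ncard := by
        rw [← Set.ncard_coe_finset]
        refine Set.ncard_le_ncard ?_ hU
        simp [Set.insert_subset_iff, h0', Set.range_subset_iff, hvU]

theorem card_le_of_mFeasible (htri : IsTriangular n p) {Q : Finset Pt}
    (hQ : MFeasible ↑(triP n p) ↑(triD n p) ↑Q) : n ≤ Q.card := by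
  set S : Set Pt := ↑(insert (p 0) Q)
  have hS : S.Finite := Finset.finite_toSet _
  have hp0 : p 0 ∈ S := mem_insert_self _ _
  have : Finite (rowColumnGraph S).edgeSet := (finite_edgeSet_rowColumnGraph hS).to_subtype
  set C := (rowColumnGraph S).connectedComponentMk (Sum.inl (p 0).1)
  have hC : Sum.inl (p 0).1 ∈ C.supp := rfl
  have hlines : n + 2 ≤ C.supp.ncard :=
    htri.add_two_le_ncard (finite_supp_rowColumnGraph C hS hp0 hC) hC
      ((C.mem_supp_congr_adj (rowColumnGraph_adj_of_mem hp0)).1 hC)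
      fun i hi => htri.line_mem_supp_of_mConnected hi C hC (hQ _ (mem_triD.2 ⟨i, hi, rfl⟩))
  have hedges : C.supp.ncard ≤ S.ncard + 1 := by
    rw [← Nat.card_coe_set_eq]
    exact C.card_supp_le_card_edgeSet_add_one.trans
      (by gcongr; exact card_edgeSet_rowColumnGraph_le hS)
  have hS_card : S.ncard ≤ Q.card + 1 := by
    rw [Set.ncard_coe_finset]
    exact card_insert_le _ _
  omega

end IsTriangular

theorem stmt11_general (n : ℕ) (p : Fin (n + 1) → Pt) (htri : IsTriangular n p) :
    optN ↑(triP n p) ↑(triD n p) = n := by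
  have hfeas := IsTriangular.mFeasible_corners (p := p)
  refine le_antisymm (Nat.sInf_le ⟨_, hfeas, htri.card_corners⟩) ?_
  exact le_csInf ⟨n, _, hfeas, htri.card_corners⟩ fun m ⟨Q, hQ, hm⟩ =>
    hm ▸ htri.card_le_of_mFeasible hQ

/-- Every triangular instance of size `n ≥ 1` has `opt(P_Δ, D_Δ) = n`. -/
theorem stmt11 (n : ℕ) (hn : 1 ≤ n) (p : Fin (n + 1) → Pt) (htri : IsTriangular n p) :
    optN ↑(triP n p) ↑(triD n p) = n :=
  stmt11_general n p htri
end

section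
/- Let (P_Δ, D_Δ) be a triangular instance of size n ≥ 1 and let Q ⊆ ℝ² be a feasible solution for (P_Δ, D_Δ) with |Q| = n. Then Q is contained in the triangular grid G_Δ of the instance. -/
/-!
Write `p₀` for the apex and `D` for the targets of the instance. By induction on `D` we prove at
once that every feasible solution has at least `|D|` points and that every feasible solution with
exactly `|D|` points lies on the grid. For the bound, drop the highest target `d₁` together with
the last solution point `w` on a route to it. For rigidity, every point of an optimal `Q` is
indispensable; a coordinatewise maximal one, `v`, is indispensable for a single target `d`, and
every route to `d` turns a corner at `v`, arriving from some `u` and leaving straight to `d`.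
Removing `v` and `d` leaves an optimal solution of the smaller instance, which lies on its grid;
so `v` takes one coordinate from `d` and the other from `u`.
-/

open Set
open scoped Interval

namespace MinGMConn

lemma abs_sub_add_abs_sub_eq_iff {G : Type*} [AddCommGroup G] [LinearOrder G]
    [IsOrderedAddMonoid G] {a b c : G} : |a - b| + |b - c| = |a - c| ↔ b ∈ [[a, c]] := by
  rw [mem_uIcc, eq_comm, ← sub_add_sub_cancel a b c, abs_add_eq_add_abs_iff, sub_nonneg,
    sub_nonneg, sub_nonpos, sub_nonpos]
  tauto

lemma rect_eq_uIcc (a b : Pt) : Rect a b = [[a, b]] := by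
  ext z
  simp only [Rect, inf_le_iff, le_sup_iff, mem_ofPred_eq, uIcc, mem_Icc, Prod.le_def,
    Prod.fst_inf, Prod.snd_inf, Prod.fst_sup, Prod.snd_sup]
  tauto

lemma dist1_triangle (a b c : Pt) : dist1 a c ≤ dist1 a b + dist1 b c := by
  unfold dist1
  linarith [abs_sub_le a.1 b.1 c.1, abs_sub_le a.2 b.2 c.2]

lemma dist1_add_dist1_eq_iff {a b c : Pt} : dist1 a b + dist1 b c = dist1 a c ↔ b ∈ [[a, c]] := by
  rw [uIcc_prod_eq, mem_prod, ← abs_sub_add_abs_sub_eq_iff, ← abs_sub_add_abs_sub_eq_iff]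
  unfold dist1
  have := abs_sub_le a.1 b.1 c.1
  have := abs_sub_le a.2 b.2 c.2
  constructor
  · intro h; constructor <;> linarith
  · rintro ⟨h, h'⟩; linarith

/-- The condition `u ∈ [[p, r]]` is what keeps the length of the path equal to `dist1 p r`. -/
inductive MReach (S : Set Pt) (p : Pt) : Pt → Prop
  | refl : p ∈ S → MReach S p p
  | tail {u r : Pt} : MReach S p u → r ∈ S → Aligned u r → u ∈ [[p, r]] → MReach S p r

namespace MReach

variable {S T : Set Pt} {p q v : Pt}

lemma mem (h : MReach S p q) : q ∈ S := by
  cases h <;> assumption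

lemma mono_of_uIcc (h : MReach S p q) (hST : ∀ z ∈ S, z ∈ [[p, q]] → z ∈ T) : MReach T p q := by
  induction h with
  | refl hp => exact refl (hST _ hp left_mem_uIcc)
  | tail _ hr hal hu ih =>
    exact tail (ih fun z hz hzu => hST z hz (uIcc_subset_uIcc_left hu hzu))
      (hST _ hr right_mem_uIcc) hal hu

lemma exists_pred (h : MReach S p v) (hv : v ≠ p) :
    ∃ u, MReach (S \ {v}) p u ∧ Aligned u v ∧ u ∈ [[p, v]] := by
  suffices ∀ q, MReach S p q → MReach (S \ {v}) p q ∨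
      v ∈ [[p, q]] ∧ ∃ u, MReach (S \ {v}) p u ∧ Aligned u v ∧ u ∈ [[p, v]] by
    rcases this v h with h' | ⟨_, hu⟩
    · exact absurd rfl h'.mem.2
    · exact hu
  intro q hq
  induction hq with
  | refl hp => exact .inl (refl ⟨hp, hv.symm⟩)
  | @tail u r _ hr hal hu ih =>
    rcases ih with ih | ⟨hvu, hpred⟩
    · by_cases hrv : r = v
      · subst hrv
        exact .inr ⟨right_mem_uIcc, u, ih, hal, hu⟩
      · exact .inl (tail ih ⟨hr, hrv⟩ hal hu)
    · exact .inr ⟨uIcc_subset_uIcc_left hu hvu, hpred⟩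

lemma exists_succ (h : MReach S p q) (hcut : ¬ MReach (S \ {v}) p q) (hvq : v ≠ q) :
    MReach S p v ∧ ∃ z ∈ S, z ≠ v ∧ Aligned v z ∧ v ∈ [[p, z]] ∧ z ∈ [[p, q]] := by
  suffices MReach (S \ {v}) p q ∨ q = v ∨
      MReach S p v ∧ ∃ z ∈ S, z ≠ v ∧ Aligned v z ∧ v ∈ [[p, z]] ∧ z ∈ [[p, q]] by
    tauto
  clear hcut hvq
  induction h with
  | refl hp =>
    by_cases hpv : p = v
    · exact .inr (.inl hpv)
    · exact .inl (refl ⟨hp, hpv⟩)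
  | @tail u r hu hr hal hur ih =>
    by_cases hrv : r = v
    · exact .inr (.inl hrv)
    rcases ih with ih | rfl | ⟨hv, z, hz, hzv, hvz, hvpz, hzu⟩
    · exact .inl (tail ih ⟨hr, hrv⟩ hal hur)
    · exact .inr (.inr ⟨hu, r, hr, hrv, hal, hur, right_mem_uIcc⟩)
    · exact .inr (.inr ⟨hv, z, hz, hzv, hvz, hvpz, uIcc_subset_uIcc_left hur hzu⟩)

end MReach

lemma dist1_le_sum (k : ℕ) (f : Fin (k + 1) → Pt) :
    dist1 (f 0) (f (Fin.last k)) ≤ ∑ i : Fin k, dist1 (f i.castSucc) (f i.succ) := by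
  induction k with
  | zero => simp [dist1]
  | succ k ih =>
    rw [Fin.sum_univ_castSucc]
    have := ih fun i => f i.castSucc
    simp only [Fin.castSucc_zero, Fin.succ_castSucc, Fin.succ_last] at this ⊢
    linarith [dist1_triangle (f 0) (f (Fin.last k).castSucc) (f (Fin.last (k + 1)))]

lemma mreach_of_path {S : Set Pt} (k : ℕ) (f : Fin (k + 1) → Pt) (hS : ∀ i, f i ∈ S)
    (hal : ∀ i : Fin k, Aligned (f i.castSucc) (f i.succ))
    (hlen : ∑ i : Fin k, dist1 (f i.castSucc) (f i.succ) ≤ dist1 (f 0) (f (Fin.last k))) :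
    MReach S (f 0) (f (Fin.last k)) := by
  induction k with
  | zero => exact .refl (hS 0)
  | succ k ih =>
    set u := f (Fin.last k).castSucc
    have hinit := dist1_le_sum k fun i => f i.castSucc
    rw [Fin.sum_univ_castSucc] at hlen
    simp only [Fin.castSucc_zero, Fin.succ_castSucc, Fin.succ_last] at hinit hlen ⊢
    have htri := dist1_triangle (f 0) u (f (Fin.last (k + 1)))
    refine .tail (ih (fun i => f i.castSucc) (fun i => hS _) (fun i => ?_) ?_) (hS _) ?_ ?_
    · simpa using hal i.castSucc
    · simp only [Fin.castSucc_zero]; linarith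
    · simpa using hal (Fin.last k)
    · exact dist1_add_dist1_eq_iff.1 (by linarith)

lemma MReach.mconnected {S : Set Pt} {p q : Pt} (h : MReach S p q) : MConnected S p q := by
  induction h with
  | refl hp => exact ⟨0, fun _ => p, rfl, rfl, fun _ => hp, fun i => i.elim0, by simp [dist1]⟩
  | @tail u r _ hr hal hu ih =>
    obtain ⟨k, f, h0, hk, hS, hal', hsum⟩ := ih
    refine ⟨k + 1, Fin.snoc (α := fun _ => Pt) f r, ?_, by simp, ?_, ?_, ?_⟩
    · simpa using h0
    · exact Fin.lastCases (by simpa using hr) (fun i => by simpa using hS i)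
    · refine Fin.lastCases ?_ fun i => ?_
      · simpa [hk] using hal
      · rw [Fin.succ_castSucc, Fin.snoc_castSucc, Fin.snoc_castSucc]
        exact hal' i
    · rw [Fin.sum_univ_castSucc]
      simp only [Fin.succ_castSucc, Fin.snoc_castSucc, Fin.succ_last, Fin.snoc_last, hsum, hk]
      exact dist1_add_dist1_eq_iff.2 hu

lemma mconnected_iff_mreach {S : Set Pt} {p q : Pt} : MConnected S p q ↔ MReach S p q := by
  refine ⟨fun ⟨k, f, h0, hk, hS, hal, hsum⟩ => ?_, MReach.mconnected⟩
  subst h0 hk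
  exact mreach_of_path k f hS hal hsum.le

open Finset

/-- `p₀` and `D` play the roles of the point `p₀` and the set `{p₁, …, pₙ}` of a triangular
instance; `[[p₀, d]]` is then the demand rectangle `R(p₀, d)`. -/
structure IsDiagonal (p₀ : Pt) (D : Finset Pt) : Prop where
  lt : ∀ d ∈ D, p₀.1 < d.1 ∧ p₀.2 < d.2
  antichain : IsAntichain (· ≤ ·) (D : Set Pt)

def Feasible (p₀ : Pt) (D Q : Finset Pt) : Prop :=
  ∀ d ∈ D, MReach ↑(insert p₀ (D ∪ Q)) p₀ d

def grid (p₀ : Pt) (D : Finset Pt) : Set Pt :=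
  {z | (∃ a ∈ insert p₀ D, a.1 = z.1) ∧ (∃ a ∈ insert p₀ D, a.2 = z.2) ∧ ∃ d ∈ D, z ∈ [[p₀, d]]}

def CardLowerBound (p₀ : Pt) (D : Finset Pt) : Prop :=
  ∀ Q, Feasible p₀ D Q → D.card ≤ Q.card

def OptimalOnGrid (p₀ : Pt) (D : Finset Pt) : Prop :=
  ∀ Q, Feasible p₀ D Q → Q.card = D.card → ↑Q ⊆ grid p₀ D

lemma grid_mono {p₀ : Pt} {D D' : Finset Pt} (h : D' ⊆ D) : grid p₀ D' ⊆ grid p₀ D :=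
  fun _ ⟨⟨a, ha, hx⟩, ⟨b, hb, hy⟩, d, hd, hz⟩ =>
    ⟨⟨a, insert_subset_insert _ h ha, hx⟩, ⟨b, insert_subset_insert _ h hb, hy⟩, d, h hd, hz⟩

lemma mem_coe_insert_union {p₀ z : Pt} {D Q : Finset Pt} :
    z ∈ (↑(insert p₀ (D ∪ Q)) : Set Pt) ↔ z = p₀ ∨ z ∈ D ∨ z ∈ Q := by
  simp

lemma coe_insert_union_erase {p₀ v : Pt} {D Q : Finset Pt} (hv : v ∉ insert p₀ D) :
    (↑(insert p₀ (D ∪ Q.erase v)) : Set Pt) = ↑(insert p₀ (D ∪ Q)) \ {v} := by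
  ext z
  by_cases hzv : z = v <;> aesop

lemma CardLowerBound.exists_cut {p₀ v : Pt} {D Q : Finset Pt} (hLB : CardLowerBound p₀ D)
    (hQ : Feasible p₀ D Q) (hcard : Q.card = D.card) (hv : v ∈ Q) :
    v ∉ insert p₀ D ∧ ∃ d ∈ D, ¬ MReach ↑(insert p₀ (D ∪ Q.erase v)) p₀ d := by
  have hinf : ¬ Feasible p₀ D (Q.erase v) := fun h => by
    have := hLB _ h
    rw [card_erase_of_mem hv] at this
    have := card_pos.2 ⟨v, hv⟩
    omega
  refine ⟨fun hvD => hinf ?_, by simpa [Feasible] using hinf⟩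
  have : insert p₀ (D ∪ Q.erase v) = insert p₀ (D ∪ Q) := by
    ext z
    by_cases hzv : z = v <;> aesop
  rwa [Feasible, this]

namespace IsDiagonal

variable {p₀ d e v : Pt} {D Q : Finset Pt}

lemma mono (hD : IsDiagonal p₀ D) {D' : Finset Pt} (h : D' ⊆ D) : IsDiagonal p₀ D' :=
  ⟨fun d hd => hD.lt d (h hd), hD.antichain.subset (coe_subset.2 h)⟩

lemma le (hD : IsDiagonal p₀ D) (hd : d ∈ D) : p₀ ≤ d :=
  Prod.le_def.2 ⟨(hD.lt d hd).1.le, (hD.lt d hd).2.le⟩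

lemma not_aligned (hD : IsDiagonal p₀ D) (hd : d ∈ D) : ¬ Aligned p₀ d := by
  rintro (h | h)
  exacts [(hD.lt d hd).1.ne h, (hD.lt d hd).2.ne h]

lemma eq_of_mem_uIcc (hD : IsDiagonal p₀ D) (hd : d ∈ D) (he : e ∈ D) (h : e ∈ [[p₀, d]]) :
    e = d := by
  rw [uIcc_of_le (hD.le hd)] at h
  exact hD.antichain.eq he hd h.2

lemma eq_of_fst_eq (hD : IsDiagonal p₀ D) (hd : d ∈ D) (he : e ∈ D) (h : d.1 = e.1) : d = e := by
  rcases le_total d.2 e.2 with h' | h'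
  · exact hD.antichain.eq hd he (Prod.le_def.2 ⟨h.le, h'⟩)
  · exact (hD.antichain.eq he hd (Prod.le_def.2 ⟨h.ge, h'⟩)).symm

lemma eq_of_snd_eq (hD : IsDiagonal p₀ D) (hd : d ∈ D) (he : e ∈ D) (h : d.2 = e.2) : d = e := by
  rcases le_total d.1 e.1 with h' | h'
  · exact hD.antichain.eq hd he (Prod.le_def.2 ⟨h', h.le⟩)
  · exact (hD.antichain.eq he hd (Prod.le_def.2 ⟨h', h.ge⟩)).symm

/-- Inside `[[p₀, e]]` the only target is `e` itself, so dropping other targets and solution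
points outside `[[p₀, e]]` does not affect the demand `(p₀, e)`. -/
lemma mreach_restrict (hD : IsDiagonal p₀ D) {D' Q' : Finset Pt} (hD' : D' ⊆ D) (he : e ∈ D')
    (h : MReach ↑(insert p₀ (D ∪ Q)) p₀ e) (hQ : ∀ q ∈ Q, q ∈ [[p₀, e]] → q ∈ Q') :
    MReach ↑(insert p₀ (D' ∪ Q')) p₀ e := by
  refine h.mono_of_uIcc fun z hz hze => ?_
  rw [mem_coe_insert_union] at hz ⊢
  rcases hz with rfl | hz | hz
  · exact .inl rfl
  · exact .inr (.inl (hD.eq_of_mem_uIcc (hD' he) hz hze ▸ he))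
  · exact .inr (.inr (hQ z hz hze))

lemma exists_entry (hD : IsDiagonal p₀ D) (hd : d ∈ D) (h : MReach ↑(insert p₀ (D ∪ Q)) p₀ d) :
    ∃ w ∈ Q, Aligned w d ∧ w ∈ [[p₀, d]] := by
  obtain ⟨w, hw, hal, hwd⟩ := h.exists_pred fun h => hD.not_aligned hd (h ▸ .inl rfl)
  obtain ⟨hwS, hwne⟩ := hw.mem
  rcases mem_coe_insert_union.1 hwS with rfl | hwD | hwQ
  · exact absurd hal (hD.not_aligned hd)
  · exact absurd (hD.eq_of_mem_uIcc hd hwD hwd) hwne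
  · exact ⟨w, hwQ, hal, hwd⟩

lemma cut (hD : IsDiagonal p₀ D) (hd : d ∈ D) (h : MReach ↑(insert p₀ (D ∪ Q)) p₀ d)
    (hv : Maximal (· ∈ Q) v) (hvD : v ∉ insert p₀ D)
    (hcut : ¬ MReach ↑(insert p₀ (D ∪ Q.erase v)) p₀ d) :
    v ∈ [[p₀, d]] ∧ ∃ u ∈ insert p₀ (Q.erase v), u ∈ [[p₀, v]] ∧
      MReach ↑(insert p₀ (D ∪ Q.erase v)) p₀ u ∧
      (v.1 = d.1 ∧ u.2 = v.2 ∨ v.2 = d.2 ∧ u.1 = v.1) := by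
  rw [coe_insert_union_erase hvD] at hcut ⊢
  have hvp : v ≠ p₀ := fun h => hvD (h ▸ Finset.mem_insert_self _ _)
  have hvd : v ≠ d := fun h => hvD (h ▸ Finset.mem_insert_of_mem hd)
  obtain ⟨hreach, z, hzS, hzv, hvz, hvpz, hzI⟩ := h.exists_succ hcut hvd
  rw [uIcc_of_le (hD.le hd)] at hzI
  rw [uIcc_of_le hzI.1] at hvpz
  -- The point after `v` lies in `Icc v d`; maximality of `v` rules out a point of `Q`.
  have hzd : z = d := by
    rcases mem_coe_insert_union.1 hzS with rfl | hzD | hzQ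
    · exact absurd (le_antisymm hvpz.2 hvpz.1) hvp
    · exact hD.antichain.eq hzD hd hzI.2
    · exact absurd (hv.eq_of_ge hzQ hvpz.2) hzv
  subst z
  have hvz' : v ∈ [[p₀, d]] := Icc_subset_uIcc hvpz
  obtain ⟨u, hu, hal, hupv⟩ := hreach.exists_pred hvp
  have huz : u ∈ [[p₀, d]] := uIcc_subset_uIcc_left hvz' hupv
  have hshort : ¬ Aligned u d := fun hal' =>
    hcut (hu.tail ⟨by simp [hd], hvd.symm⟩ hal' huz)
  have hcorner : v.1 = d.1 ∧ u.2 = v.2 ∨ v.2 = d.2 ∧ u.1 = v.1 := by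
    rcases hvz with h₁ | h₁ <;> rcases hal with h₂ | h₂
    exacts [absurd (.inl (h₂.trans h₁)) hshort, .inl ⟨h₁, h₂⟩, .inr ⟨h₁, h₂⟩,
      absurd (.inr (h₂.trans h₁)) hshort]
  refine ⟨hvz', u, ?_, hupv, hu, hcorner⟩
  obtain ⟨huS, huv⟩ := hu.mem
  rcases mem_coe_insert_union.1 huS with rfl | huD | huQ
  · exact Finset.mem_insert_self _ _
  · have := hD.eq_of_mem_uIcc hd huD huz
    subst this
    exact absurd (eq_of_mem_uIcc_of_mem_uIcc' hvz' hupv) hvd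
  · exact Finset.mem_insert_of_mem (Finset.mem_erase.2 ⟨huv, huQ⟩)

lemma eq_of_cut (hD : IsDiagonal p₀ D) (hd : d ∈ D) (he : e ∈ D)
    (hQ : Feasible p₀ D Q) (hv : Maximal (· ∈ Q) v) (hvD : v ∉ insert p₀ D)
    (hcutd : ¬ MReach ↑(insert p₀ (D ∪ Q.erase v)) p₀ d)
    (hcute : ¬ MReach ↑(insert p₀ (D ∪ Q.erase v)) p₀ e) : d = e := by
  obtain ⟨hvd, u, -, hud, hu, hd'⟩ := hD.cut hd (hQ d hd) hv hvD hcutd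
  obtain ⟨hve, w, -, hwe, hw, he'⟩ := hD.cut he (hQ e he) hv hvD hcute
  have hdS : d ∈ (↑(insert p₀ (D ∪ Q.erase v)) : Set Pt) := by simp [hd]
  have heS : e ∈ (↑(insert p₀ (D ∪ Q.erase v)) : Set Pt) := by simp [he]
  rcases hd' with ⟨h₁, h₂⟩ | ⟨h₁, h₂⟩ <;> rcases he' with ⟨h₃, h₄⟩ | ⟨h₃, h₄⟩
  · exact hD.eq_of_fst_eq hd he (h₁.symm.trans h₃)
  · exact absurd (hw.tail hdS (.inl (h₄.trans h₁)) (uIcc_subset_uIcc_left hvd hwe)) hcutd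
  · exact absurd (hu.tail heS (.inl (h₂.trans h₃)) (uIcc_subset_uIcc_left hve hud)) hcute
  · exact hD.eq_of_snd_eq hd he (h₁.symm.trans h₃)

lemma mem_grid_of_cut (hD : IsDiagonal p₀ D) (hd : d ∈ D) (h : MReach ↑(insert p₀ (D ∪ Q)) p₀ d)
    (hv : Maximal (· ∈ Q) v) (hvD : v ∉ insert p₀ D)
    (hcut : ¬ MReach ↑(insert p₀ (D ∪ Q.erase v)) p₀ d) (hgrid : ↑(Q.erase v) ⊆ grid p₀ D) :
    v ∈ grid p₀ D := by
  obtain ⟨hvd, u, hu, -, -, hcorner⟩ := hD.cut hd h hv hvD hcut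
  have hucoord : (∃ a ∈ insert p₀ D, a.1 = u.1) ∧ (∃ a ∈ insert p₀ D, a.2 = u.2) := by
    rcases Finset.mem_insert.1 hu with rfl | hu
    · exact ⟨⟨u, mem_insert_self _ _, rfl⟩, ⟨u, mem_insert_self _ _, rfl⟩⟩
    · exact ⟨(hgrid hu).1, (hgrid hu).2.1⟩
  have hdmem : d ∈ insert p₀ D := mem_insert_of_mem hd
  rcases hcorner with ⟨h₁, h₂⟩ | ⟨h₁, h₂⟩
  · exact ⟨⟨d, hdmem, h₁.symm⟩, h₂ ▸ hucoord.2, d, hd, hvd⟩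
  · exact ⟨h₂ ▸ hucoord.1, ⟨d, hdmem, h₁.symm⟩, d, hd, hvd⟩

lemma fst_ne_of_mem_grid_erase (hD : IsDiagonal p₀ D) (hd : d ∈ D) {z : Pt}
    (hz : z ∈ grid p₀ (D.erase d)) : z.1 ≠ d.1 := by
  obtain ⟨⟨a, ha, haz⟩, -⟩ := hz
  intro hzd
  rcases Finset.mem_insert.1 ha with rfl | ha
  · exact (hD.lt d hd).1.ne (haz.trans hzd)
  · exact (mem_erase.1 ha).1 (hD.eq_of_fst_eq (mem_of_mem_erase ha) hd (haz.trans hzd))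

lemma cardLowerBound_of_erase (hD : IsDiagonal p₀ D) {d₁ : Pt} (hd₁ : d₁ ∈ D)
    (hmax : ∀ e ∈ D, e.2 ≤ d₁.2) (hLB : CardLowerBound p₀ (D.erase d₁))
    (hgrid : OptimalOnGrid p₀ (D.erase d₁)) : CardLowerBound p₀ D := by
  intro Q hQ
  have hcard := card_erase_add_one hd₁
  obtain ⟨w, hwQ, hal, -⟩ := hD.exists_entry hd₁ (hQ d₁ hd₁)
  have hQpos : 0 < Q.card := card_pos.2 ⟨w, hwQ⟩
  by_cases hw : ∃ e ∈ D.erase d₁, w ∈ [[p₀, e]]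
  -- `w` also serves `e`, so it lies below `e` and hence on the vertical line through `d₁`,
  -- which the grid of the smaller instance misses.
  · obtain ⟨e, he, hwe⟩ := hw
    have hQ' : Feasible p₀ (D.erase d₁) Q := fun e he =>
      hD.mreach_restrict (erase_subset _ _) he (hQ e (mem_of_mem_erase he)) fun q hq _ => hq
    have hle := hLB Q hQ'
    by_contra hlt
    have hwgrid := hgrid Q hQ' (by omega) hwQ
    have hed : e.2 < d₁.2 := (hmax e (mem_of_mem_erase he)).lt_of_ne fun h =>
      (mem_erase.1 he).1 (hD.eq_of_snd_eq (mem_of_mem_erase he) hd₁ h)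
    rw [uIcc_of_le (hD.le (mem_of_mem_erase he))] at hwe
    rcases hal with h | h
    · exact hD.fst_ne_of_mem_grid_erase hd₁ hwgrid h
    · exact absurd (h ▸ hwe.2.2 : d₁.2 ≤ e.2) (not_le.2 hed)
  · simp only [not_exists, not_and] at hw
    have hQ' : Feasible p₀ (D.erase d₁) (Q.erase w) := fun e he =>
      hD.mreach_restrict (erase_subset _ _) he (hQ e (mem_of_mem_erase he)) fun q hq hqe =>
        mem_erase.2 ⟨by rintro rfl; exact hw e he hqe, hq⟩
    have := hLB _ hQ'
    rw [card_erase_of_mem hwQ] at this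
    omega

lemma optimalOnGrid_of_erase (hD : IsDiagonal p₀ D) (hLB : CardLowerBound p₀ D)
    (ih : ∀ d ∈ D, OptimalOnGrid p₀ (D.erase d)) : OptimalOnGrid p₀ D := by
  intro Q hQ hcard
  rcases Q.eq_empty_or_nonempty with rfl | hQne
  · simp
  obtain ⟨v, hv⟩ := Q.exists_maximal hQne
  obtain ⟨hvD, d, hd, hcut⟩ := hLB.exists_cut hQ hcard hv.prop
  have hred : Feasible p₀ (D.erase d) (Q.erase v) := fun e he => by
    obtain ⟨hed, heD⟩ := mem_erase.1 he
    have : MReach ↑(insert p₀ (D ∪ Q.erase v)) p₀ e := by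
      by_contra hcute
      exact hed (hD.eq_of_cut heD hd hQ hv hvD hcute hcut)
    exact hD.mreach_restrict (erase_subset d D) he this fun q hq _ => hq
  have hgrid : ↑(Q.erase v) ⊆ grid p₀ D :=
    (ih d hd _ hred (by rw [card_erase_of_mem hv.prop, card_erase_of_mem hd, hcard])).trans
      (grid_mono (erase_subset d D))
  intro z hz
  by_cases hzv : z = v
  · exact hzv ▸ hD.mem_grid_of_cut hd (hQ d hd) hv hvD hcut hgrid
  · exact hgrid (mem_erase.2 ⟨hzv, hz⟩)

theorem cardLowerBound_and_optimalOnGrid (hD : IsDiagonal p₀ D) :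
    CardLowerBound p₀ D ∧ OptimalOnGrid p₀ D := by
  induction D using Finset.strongInduction with
  | H D ih =>
  have ih' : ∀ d ∈ D, CardLowerBound p₀ (D.erase d) ∧ OptimalOnGrid p₀ (D.erase d) :=
    fun d hd => ih _ (erase_ssubset hd) (hD.mono (erase_subset d D))
  have hLB : CardLowerBound p₀ D := by
    rcases D.eq_empty_or_nonempty with rfl | hne
    · exact fun Q _ => by simp
    obtain ⟨d₁, hd₁, hmax⟩ := D.exists_max_image Prod.snd hne
    exact hD.cardLowerBound_of_erase hd₁ hmax (ih' d₁ hd₁).1 (ih' d₁ hd₁).2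
  exact ⟨hLB, hD.optimalOnGrid_of_erase hLB fun d hd => (ih' d hd).2⟩

end IsDiagonal

variable {n : ℕ} {p : Fin (n + 1) → Pt}

noncomputable def triTargets (n : ℕ) (p : Fin (n + 1) → Pt) : Finset Pt := (univ.erase 0).image p

lemma insert_triTargets (n : ℕ) (p : Fin (n + 1) → Pt) :
    insert (p 0) (triTargets n p) = triP n p := by
  rw [triTargets, ← image_insert, insert_erase (mem_univ 0), triP]

lemma mem_triTargets {d : Pt} : d ∈ triTargets n p ↔ ∃ i ≠ 0, p i = d := by
  simp [triTargets]

lemma isDiagonal_triTargets (htri : IsTriangular n p) : IsDiagonal (p 0) (triTargets n p) := by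
  obtain ⟨hx, hy, hy₀⟩ := htri
  refine ⟨fun d hd => ?_, fun d hd e he hde hle => ?_⟩
  · obtain ⟨i, hi, rfl⟩ := mem_triTargets.1 hd
    exact ⟨hx 0 i (Fin.pos_of_ne_zero hi), hy₀ i hi⟩
  · obtain ⟨i, hi, rfl⟩ := mem_triTargets.1 (mem_coe.1 hd)
    obtain ⟨j, hj, rfl⟩ := mem_triTargets.1 (mem_coe.1 he)
    rcases lt_trichotomy i j with hij | rfl | hij
    · exact (hy i j hi hij).not_ge hle.2
    · exact hde rfl
    · exact (hx j i hij).not_ge hle.1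

lemma card_triTargets (htri : IsTriangular n p) : (triTargets n p).card = n := by
  have hinj : Function.Injective p := fun i j h =>
    StrictMono.injective (f := fun i => (p i).1) (fun i j => htri.1 i j) (congrArg Prod.fst h)
  rw [triTargets, card_image_of_injective _ hinj, card_erase_of_mem (mem_univ 0), card_univ,
    Fintype.card_fin, Nat.add_sub_cancel]

lemma feasible_triTargets {Q : Finset Pt} (hfeas : MFeasible ↑(triP n p) ↑(triD n p) ↑Q) :
    Feasible (p 0) (triTargets n p) Q := by
  intro d hd
  obtain ⟨i, hi, rfl⟩ := mem_triTargets.1 hd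
  have hdem : (p 0, p i) ∈ (↑(triD n p) : Set Dem) :=
    mem_coe.2 (mem_image.2 ⟨i, mem_filter.2 ⟨mem_univ i, hi⟩, rfl⟩)
  rw [← Finset.insert_union, insert_triTargets, coe_union, ← mconnected_iff_mreach]
  exact hfeas _ hdem

lemma grid_triTargets_subset (n : ℕ) (p : Fin (n + 1) → Pt) :
    grid (p 0) (triTargets n p) ⊆ triGrid n p := by
  rintro z ⟨⟨a, ha, hx⟩, ⟨b, hb, hy⟩, d, hd, hz⟩
  rw [insert_triTargets, triP, Finset.mem_image] at ha hb
  obtain ⟨i, -, rfl⟩ := ha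
  obtain ⟨j, -, rfl⟩ := hb
  obtain ⟨k, hk, rfl⟩ := mem_triTargets.1 hd
  exact ⟨⟨i, hx.symm⟩, ⟨j, hy.symm⟩, k, hk, (rect_eq_uIcc _ _).symm ▸ hz⟩

end MinGMConn

theorem stmt12_general (n : ℕ) (p : Fin (n + 1) → Pt) (htri : IsTriangular n p)
    (Q : Finset Pt) (hfeas : MFeasible ↑(triP n p) ↑(triD n p) ↑Q) (hcard : Q.card = n) :
    ↑Q ⊆ triGrid n p := by
  have hD := MinGMConn.isDiagonal_triTargets htri
  have hopt := hD.cardLowerBound_and_optimalOnGrid.2 Q (MinGMConn.feasible_triTargets hfeas)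
    (by rw [hcard, MinGMConn.card_triTargets htri])
  exact hopt.trans (MinGMConn.grid_triTargets_subset n p)

/-- Any feasible solution of size `n` to a triangular instance of size `n ≥ 1`
is contained in the triangular grid. -/
theorem stmt12 (n : ℕ) (hn : 1 ≤ n) (p : Fin (n + 1) → Pt) (htri : IsTriangular n p)
    (Q : Finset Pt) (hfeas : MFeasible ↑(triP n p) ↑(triD n p) ↑Q) (hcard : Q.card = n) :
    ↑Q ⊆ triGrid n p :=
  stmt12_general n p htri Q hfeas hcard
end

section
/- Let (P,D) be a MinGMConn instance such that no two points of P are horizontally or vertically aligned and such that the undirected graph with vertex set P and edge set D is connected. Then opt(P,D) ≥ |P| − 1. -/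
open Finset Relation

theorem Aligned.symm {p q : Pt} (h : Aligned p q) : Aligned q p :=
  h.imp Eq.symm Eq.symm

/-- Adjacency in the Manhattan graph `G_S`, with loops. -/
def AlignedIn (S : Set Pt) (p q : Pt) : Prop := p ∈ S ∧ q ∈ S ∧ Aligned p q

instance (S : Set Pt) : Std.Symm (AlignedIn S) where
  symm _ _ h := ⟨h.2.1, h.1, h.2.2.symm⟩

theorem MConnected.reflTransGen {S : Set Pt} {p q : Pt} (h : MConnected S p q) :
    ReflTransGen (AlignedIn S) p q := by
  obtain ⟨k, f, rfl, rfl, hS, hal, -⟩ := h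
  exact Fin.induction .refl (fun i ih => ih.tail ⟨hS _, hS _, hal i⟩) (Fin.last k)

theorem mConnected_of_corner_mem_s16 {S : Set Pt} {p q : Pt} (hp : p ∈ S) (hc : (p.1, q.2) ∈ S)
    (hq : q ∈ S) : MConnected S p q := by
  refine ⟨2, ![p, (p.1, q.2), q], rfl, rfl, ?_, ?_, ?_⟩
  · intro i
    fin_cases i <;> assumption
  · intro i
    fin_cases i
    exacts [Or.inl rfl, Or.inr rfl]
  · simp [Fin.sum_univ_two, dist1, add_comm]

theorem exists_mFeasible (P : Set Pt) (D : Finset Dem) :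
    ∃ Q : Finset Pt, MFeasible P ↑D ↑Q := by
  classical
  let Q := D.biUnion fun d => {d.1, (d.1.1, d.2.2), d.2}
  have hQ : ∀ d ∈ D, ∀ z ∈ ({d.1, (d.1.1, d.2.2), d.2} : Finset Pt), z ∈ P ∪ ↑Q :=
    fun d hd z hz => Or.inr (mem_biUnion.mpr ⟨d, hd, hz⟩)
  exact ⟨Q, fun d hd => mConnected_of_corner_mem_s16 (hQ d hd _ (by simp)) (hQ d hd _ (by simp))
    (hQ d hd _ (by simp))⟩

theorem Relation.ReflTransGen.exists_rel_of_mem_of_notMem {α : Type*} {r : α → α → Prop}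
    {s : Set α} {a b : α} (h : ReflTransGen r a b) (ha : a ∈ s) (hb : b ∉ s) :
    ∃ x ∈ s, ∃ y ∉ s, r x y := by
  induction h with
  | refl => exact absurd ha hb
  | @tail c d _ hcd ih =>
    by_cases hc : c ∈ s
    · exact ⟨c, hc, d, hb, hcd⟩
    · exact ih hc

noncomputable def numCoords (A : Finset Pt) : ℕ := #(A.image Prod.fst) + #(A.image Prod.snd)

theorem numCoords_insert_le {A : Finset Pt} {w y : Pt} (hw : w ∈ A) (h : Aligned w y) :
    numCoords (insert y A) ≤ numCoords A + 1 := by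
  unfold numCoords
  rw [image_insert, image_insert]
  rcases h with h | h
  · rw [insert_eq_self.mpr (mem_image.mpr ⟨w, hw, h⟩)]
    have := card_insert_le y.2 (A.image Prod.snd)
    omega
  · rw [insert_eq_of_mem (s := A.image Prod.snd) (mem_image.mpr ⟨w, hw, h⟩)]
    have := card_insert_le y.1 (A.image Prod.fst)
    omega

theorem numCoords_le_card_add_one_of_subset {C A : Finset Pt} {p₀ : Pt} (hAC : A ⊆ C)
    (hp₀ : p₀ ∈ A) (hC : ∀ z ∈ C, ReflTransGen (AlignedIn ↑C) p₀ z)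
    (hA : numCoords A ≤ #A + 1) : numCoords C ≤ #C + 1 := by
  by_cases hCA : C ⊆ A
  · rwa [hAC.antisymm hCA] at hA
  obtain ⟨z, hzC, hzA⟩ := not_subset.mp hCA
  obtain ⟨w, hw, y, hy, hwy⟩ :=
    (hC z hzC).exists_rel_of_mem_of_notMem (s := ↑A) (mem_coe.mpr hp₀) (mt mem_coe.mp hzA)
  refine numCoords_le_card_add_one_of_subset (insert_subset hwy.2.1 hAC)
    (mem_insert_of_mem hp₀) hC ?_
  have := numCoords_insert_le hw hwy.2.2
  rw [card_insert_of_notMem hy]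
  omega
termination_by #(C \ A)
decreasing_by
  rw [sdiff_insert]
  exact card_erase_lt_of_mem (mem_sdiff.mpr ⟨hwy.2.1, hy⟩)

theorem numCoords_le_card_add_one {C : Finset Pt} {p₀ : Pt} (hp₀ : p₀ ∈ C)
    (hC : ∀ z ∈ C, ReflTransGen (AlignedIn ↑C) p₀ z) : numCoords C ≤ #C + 1 :=
  numCoords_le_card_add_one_of_subset (singleton_subset_iff.mpr hp₀) (mem_singleton_self p₀) hC
    (by simp [numCoords])

open Classical in
theorem reflTransGen_alignedIn_filter {S : Finset Pt} {p₀ z : Pt}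
    (h : ReflTransGen (AlignedIn ↑S) p₀ z) :
    ReflTransGen (AlignedIn ↑(S.filter (ReflTransGen (AlignedIn ↑S) p₀))) p₀ z := by
  induction h with
  | refl => exact .refl
  | @tail b c hb hbc ih =>
    exact ih.tail
      ⟨mem_filter.mpr ⟨hbc.1, hb⟩, mem_filter.mpr ⟨hbc.2.1, hb.tail hbc⟩, hbc.2.2⟩

theorem MFeasible.reflTransGen_of_reachable {P : Finset Pt} {D : Finset Dem} {Q : Set Pt}
    (hQ : MFeasible ↑P ↑D Q) {a b : P} (h : (demandGraph P D).Reachable a b) :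
    ReflTransGen (AlignedIn (↑P ∪ Q)) a b := by
  rw [SimpleGraph.reachable_iff_reflTransGen] at h
  refine ReflTransGen.lift' Subtype.val (fun a b hab => ?_) _ _ h
  rcases hab.2 with hD | hD
  · exact (hQ _ hD).reflTransGen
  · exact symm (hQ _ hD).reflTransGen

theorem MFeasible.card_sub_one_le {P Q : Finset Pt} {D : Finset Dem}
    (hQ : MFeasible ↑P ↑D ↑Q) (hconn : (demandGraph P D).Connected)
    (hx : Set.InjOn Prod.fst (P : Set Pt)) (hy : Set.InjOn Prod.snd (P : Set Pt)) :
    #P - 1 ≤ #Q := by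
  classical
  obtain ⟨⟨p₀, hp₀⟩⟩ := hconn.nonempty
  let S := P ∪ Q
  let C := S.filter (ReflTransGen (AlignedIn ↑S) p₀)
  have hPC : P ⊆ C := fun p hp => mem_filter.mpr ⟨mem_union_left _ hp, coe_union P Q ▸
    hQ.reflTransGen_of_reachable (hconn.preconnected ⟨p₀, hp₀⟩ ⟨p, hp⟩)⟩
  have hC : numCoords C ≤ #C + 1 :=
    numCoords_le_card_add_one (hPC hp₀) fun _ hz =>
      reflTransGen_alignedIn_filter (mem_filter.mp hz).2
  have hCx : #P ≤ #(C.image Prod.fst) :=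
    (card_image_of_injOn hx).ge.trans (card_le_card (image_subset_image hPC))
  have hCy : #P ≤ #(C.image Prod.snd) :=
    (card_image_of_injOn hy).ge.trans (card_le_card (image_subset_image hPC))
  have hCS : #C ≤ #P + #Q := (card_filter_le _ _).trans (card_union_le _ _)
  unfold numCoords at hC
  omega

theorem stmt16_general (P : Finset Pt) (D : Finset Dem)
    (halign : ∀ p ∈ P, ∀ q ∈ P, p ≠ q → p.1 ≠ q.1 ∧ p.2 ≠ q.2)
    (hconn : (demandGraph P D).Connected) :
    P.card - 1 ≤ optN ↑P ↑D := by
  obtain ⟨Q₀, hQ₀⟩ := exists_mFeasible ↑P D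
  obtain ⟨Q, hQ, hcard⟩ :=
    Nat.sInf_mem (s := {n | ∃ Q : Finset Pt, MFeasible ↑P ↑D ↑Q ∧ Q.card = n})
      ⟨_, Q₀, hQ₀, rfl⟩
  rw [optN, ← hcard]
  exact hQ.card_sub_one_le hconn
    (fun p hp q hq h => by_contra fun hne => (halign p hp q hq hne).1 h)
    (fun p hp q hq h => by_contra fun hne => (halign p hp q hq hne).2 h)

/-- If no two input points are horizontally or vertically aligned and the demand
graph is connected, then `opt(P,D) ≥ |P| − 1`. -/
theorem stmt16 (P : Finset Pt) (D : Finset Dem)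
    (hinst : IsInstance P D)
    (halign : ∀ p ∈ P, ∀ q ∈ P, p ≠ q → p.1 ≠ q.1 ∧ p.2 ≠ q.2)
    (hconn : (demandGraph P D).Connected) :
    P.card - 1 ≤ optN ↑P ↑D :=
  stmt16_general P D halign hconn
end
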